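/- arXiv:2310.18904 — 2 statements merged into one kernel-verified Lean document; each statement's English description precedes it below -/
import Mathlib

section
/- Let Ā ∈ ℝ^{N×N} be symmetric positive semidefinite with eigendecomposition Ā = UΣUᵀ and σ₁ > σ₂ > … > σ_k > σ_{k+1} ≥ … ≥ σ_N ≥ 0 with σ_k > 0. Suppose indices x₀₁,…,x₀k ∈ {1,…,N} are given such that the (x₀j)-th entry of the j-th column of U is nonzero for each j ∈ {1,…,k}. Then there is exactly one pair (F, S) minimizing ‖Ā − F S Fᵀ‖_F² subject to FᵀF = I_k, S diagonal with nonincreasing nonnegative diagonal entries, and the additional sign-fixing constraint F_{x₀j, j} > 0 for all j ∈ {1,…,k}. (Exact feature identifiability after sign correction.) -/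
open Matrix BigOperators

/-- Squared Frobenius norm of a real matrix. -/
noncomputable def frobSq {m n : Type*} [Fintype m] [Fintype n] (M : Matrix m n ℝ) : ℝ :=
  ∑ i, ∑ j, (M i j) ^ 2

lemma frobSq_trace {m n : Type*} [Fintype m] [Fintype n] (M : Matrix m n ℝ) :
    frobSq M = Matrix.trace (Mᵀ * M) := by
  simp only [frobSq, Matrix.trace, Matrix.diag, Matrix.mul_apply, Matrix.transpose_apply, sq]
  exact Finset.sum_comm

lemma val_eq {N k : ℕ} (U : Matrix (Fin N) (Fin N) ℝ) (σ : Fin N → ℝ)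
    (hU : Uᵀ * U = 1) (F : Matrix (Fin N) (Fin k) ℝ) (s : Fin k → ℝ) (hF : Fᵀ * F = 1) :
    frobSq (U * Matrix.diagonal σ * Uᵀ - F * Matrix.diagonal s * Fᵀ)
      = frobSq (U * Matrix.diagonal σ * Uᵀ)
        - ∑ j, (∑ i, σ i * ((Uᵀ * F) i j) ^ 2) ^ 2
        + ∑ j, (s j - ∑ i, σ i * ((Uᵀ * F) i j) ^ 2) ^ 2 := by
  set A := U * Matrix.diagonal σ * Uᵀ with hA
  set B := F * Matrix.diagonal s * Fᵀ with hB
  set G := Uᵀ * F with hG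
  have hUU : U * Uᵀ = 1 := mul_eq_one_comm.mp hU
  have hAT : Aᵀ = A := by
    rw [hA]; simp [Matrix.transpose_mul, Matrix.diagonal_transpose, Matrix.mul_assoc]
  have hBT : Bᵀ = B := by
    rw [hB]; simp [Matrix.transpose_mul, Matrix.diagonal_transpose, Matrix.mul_assoc]
  have key : frobSq (A - B) =
      Matrix.trace (A * A) - 2 * Matrix.trace (A * B) + Matrix.trace (B * B) := by
    rw [frobSq_trace, Matrix.transpose_sub, hAT, hBT, Matrix.sub_mul, Matrix.mul_sub,
      Matrix.mul_sub, Matrix.trace_sub, Matrix.trace_sub, Matrix.trace_sub,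
      Matrix.trace_mul_comm B A]
    ring
  have hfA : frobSq A = Matrix.trace (A * A) := by rw [frobSq_trace, hAT]
  have hAB : Matrix.trace (A * B) = ∑ j, s j * (∑ i, σ i * (G i j) ^ 2) := by
    have e1 : A * B = U * (Matrix.diagonal σ * G * Matrix.diagonal s * Fᵀ) := by
      rw [hA, hB, hG]; noncomm_ring [Matrix.mul_assoc]
    rw [e1, Matrix.trace_mul_comm]
    have e2 : Matrix.diagonal σ * G * Matrix.diagonal s * Fᵀ * U
        = Matrix.diagonal σ * (G * Matrix.diagonal s * Gᵀ) := by
      rw [hG, Matrix.transpose_mul, Matrix.transpose_transpose]; noncomm_ring [Matrix.mul_assoc]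
    rw [e2]
    have e3 : ∀ i, (G * Matrix.diagonal s * Gᵀ) i i = ∑ j, s j * (G i j) ^ 2 := by
      intro i
      simp only [Matrix.mul_apply, Matrix.transpose_apply, Matrix.diagonal_apply, mul_ite,
        mul_zero, ite_mul, zero_mul, Finset.sum_ite_eq, Finset.sum_ite_eq', Finset.mem_univ,
        if_true]
      exact Finset.sum_congr rfl fun j _ => by ring
    have e4 : Matrix.trace (Matrix.diagonal σ * (G * Matrix.diagonal s * Gᵀ))
        = ∑ i, σ i * ∑ j, s j * (G i j) ^ 2 := by
      have : ∀ i, (Matrix.diagonal σ * (G * Matrix.diagonal s * Gᵀ)) i i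
          = σ i * ∑ j, s j * (G i j) ^ 2 := by
        intro i
        rw [Matrix.mul_apply]
        rw [show (∑ m, Matrix.diagonal σ i m * (G * Matrix.diagonal s * Gᵀ) m i)
            = σ i * (G * Matrix.diagonal s * Gᵀ) i i from by
          simp [Matrix.diagonal_apply, ite_mul, zero_mul, Finset.sum_ite_eq, Finset.mem_univ]]
        rw [e3]
      simp only [Matrix.trace, Matrix.diag]
      exact Finset.sum_congr rfl fun i _ => this i
    rw [e4]
    simp_rw [Finset.mul_sum]
    rw [Finset.sum_comm]
    exact Finset.sum_congr rfl fun j _ => Finset.sum_congr rfl fun i _ => by ring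
  have hBB : Matrix.trace (B * B) = ∑ j, (s j) ^ 2 := by
    have e1 : B * B = F * (Matrix.diagonal s * Matrix.diagonal s) * Fᵀ := by
      rw [hB]
      calc F * Matrix.diagonal s * Fᵀ * (F * Matrix.diagonal s * Fᵀ)
          = F * Matrix.diagonal s * (Fᵀ * F) * Matrix.diagonal s * Fᵀ := by
            noncomm_ring [Matrix.mul_assoc]
        _ = F * (Matrix.diagonal s * Matrix.diagonal s) * Fᵀ := by
            rw [hF]; noncomm_ring [Matrix.mul_assoc]
    rw [e1, Matrix.trace_mul_cycle, ← Matrix.mul_assoc, hF, Matrix.one_mul,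
      Matrix.diagonal_mul_diagonal]
    simp [Matrix.trace, sq]
  rw [key, ← hfA, hAB, hBB]
  have expand : ∀ (c : Fin k → ℝ), ∑ j, (s j - c j) ^ 2
      = ∑ j, (s j) ^ 2 - 2 * ∑ j, s j * c j + ∑ j, (c j) ^ 2 := by
    intro c
    rw [Finset.mul_sum, ← Finset.sum_sub_distrib, ← Finset.sum_add_distrib]
    exact Finset.sum_congr rfl fun j _ => by ring
  rw [expand]
  ring

lemma col_norm {N k : ℕ} (G : Matrix (Fin N) (Fin k) ℝ) (hG : Gᵀ * G = 1) (j : Fin k) :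
    ∑ i, (G i j) ^ 2 = 1 := by
  have h := congrFun (congrFun hG j) j
  simp only [Matrix.mul_apply, Matrix.transpose_apply, Matrix.one_apply_eq] at h
  rw [← h]
  exact Finset.sum_congr rfl fun i _ => (sq (G i j)).symm ▸ rfl

lemma orth_entry {N k : ℕ} (G : Matrix (Fin N) (Fin k) ℝ) (hG : Gᵀ * G = 1) (j l : Fin k)
    (hne : j ≠ l) : ∑ i, G i j * G i l = 0 := by
  have h := congrFun (congrFun hG j) l
  simp only [Matrix.mul_apply, Matrix.transpose_apply, Matrix.one_apply, hne, if_false] at h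
  exact h

lemma row_bound {N k : ℕ} (G : Matrix (Fin N) (Fin k) ℝ) (hG : Gᵀ * G = 1) (i : Fin N) :
    ∑ j, (G i j) ^ 2 ≤ 1 := by
  set P := G * Gᵀ with hP
  have hPP : P * P = P := by
    rw [hP, Matrix.mul_assoc, ← Matrix.mul_assoc Gᵀ, hG, Matrix.one_mul]
  have hPsym : ∀ a b, P a b = P b a := by
    intro a b
    simp only [hP, Matrix.mul_apply, Matrix.transpose_apply]
    exact Finset.sum_congr rfl fun m _ => mul_comm _ _
  have hdiag : P i i = ∑ j, (G i j) ^ 2 := by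
    simp only [hP, Matrix.mul_apply, Matrix.transpose_apply]
    exact Finset.sum_congr rfl fun j _ => (sq (G i j)).symm
  have h1 : P i i = ∑ m, (P i m) ^ 2 := by
    conv_lhs => rw [← hPP]
    simp only [Matrix.mul_apply]
    exact Finset.sum_congr rfl fun m _ => by rw [hPsym m i]; ring
  have h2 : (P i i) ^ 2 ≤ ∑ m, (P i m) ^ 2 :=
    Finset.single_le_sum (f := fun m => (P i m) ^ 2) (fun m _ => sq_nonneg _) (Finset.mem_univ i)
  have h3 : (P i i) ^ 2 ≤ P i i := h1 ▸ h2
  have h4 : 0 ≤ P i i := hdiag ▸ Finset.sum_nonneg fun j _ => sq_nonneg _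
  nlinarith [h3, h4, hdiag]

lemma jensen {N : ℕ} (σ : Fin N → ℝ) (g : Fin N → ℝ) (h1 : ∑ i, (g i) ^ 2 = 1) :
    (∑ i, σ i * (g i) ^ 2) ^ 2 ≤ ∑ i, (σ i) ^ 2 * (g i) ^ 2 := by
  have h := Finset.sum_mul_sq_le_sq_mul_sq Finset.univ (fun i => σ i * g i) g
  calc (∑ i, σ i * (g i) ^ 2) ^ 2 = (∑ i, (σ i * g i) * g i) ^ 2 := by
        congr 1; exact Finset.sum_congr rfl fun i _ => by ring
    _ ≤ (∑ i, (σ i * g i) ^ 2) * ∑ i, (g i) ^ 2 := h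
    _ = ∑ i, (σ i) ^ 2 * (g i) ^ 2 := by
        rw [h1, mul_one]; exact Finset.sum_congr rfl fun i _ => by ring

lemma sum_castLE {N k : ℕ} (hk : k ≤ N) (f : Fin N → ℝ) :
    ∑ j : Fin k, f (Fin.castLE hk j) = ∑ i : Fin N, if (i : ℕ) < k then f i else 0 := by
  rw [← Finset.sum_filter]
  have himg : Finset.univ.filter (fun i : Fin N => (i : ℕ) < k)
      = Finset.image (Fin.castLE hk) Finset.univ := by
    ext i
    simp only [Finset.mem_filter, Finset.mem_univ, true_and, Finset.mem_image]
    constructor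
    · intro hi; exact ⟨⟨(i : ℕ), hi⟩, by ext; simp⟩
    · rintro ⟨j, rfl⟩; exact j.isLt
  rw [himg, Finset.sum_image (fun a _ b _ h => Fin.castLE_injective hk h)]

lemma chain {N k : ℕ} (hk : k ≤ N) (σ : Fin N → ℝ)
    (hstrict : ∀ i j : Fin N, i < j → (j : ℕ) ≤ k → σ j < σ i)
    (hmono : ∀ i j : Fin N, k ≤ (i : ℕ) → i ≤ j → σ j ≤ σ i)
    (hnonneg : ∀ i : Fin N, 0 ≤ σ i)
    (hpos : ∀ i : Fin N, (i : ℕ) < k → 0 < σ i)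
    (G : Matrix (Fin N) (Fin k) ℝ) (hGG : Gᵀ * G = 1) :
    (∑ j : Fin k, (∑ i, σ i * (G i j) ^ 2) ^ 2 ≤ ∑ j : Fin k, (σ (Fin.castLE hk j)) ^ 2)
    ∧ (∑ j : Fin k, (∑ i, σ i * (G i j) ^ 2) ^ 2 = ∑ j : Fin k, (σ (Fin.castLE hk j)) ^ 2 →
        (∀ (i : Fin N) (j : Fin k), k ≤ (i : ℕ) → G i j = 0) ∧
        (∀ j : Fin k, ∑ i, (σ i) ^ 2 * (G i j) ^ 2 = (∑ i, σ i * (G i j) ^ 2) ^ 2)) := by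
  set t : ℝ := if h : k < N then (σ ⟨k, h⟩) ^ 2 else 0 with ht
  have ht_lo : ∀ i : Fin N, (i : ℕ) < k → t < (σ i) ^ 2 := by
    intro i hi
    rw [ht]
    split
    · next h =>
      have h1 : σ ⟨k, h⟩ < σ i := hstrict i ⟨k, h⟩ (by rw [Fin.lt_def]; exact hi) (le_refl _)
      have h2 : 0 ≤ σ ⟨k, h⟩ := hnonneg _
      nlinarith
    · exact pow_pos (hpos i hi) 2
  have ht_hi : ∀ i : Fin N, k ≤ (i : ℕ) → (σ i) ^ 2 ≤ t := by
    intro i hi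
    have hkN : k < N := lt_of_le_of_lt hi i.isLt
    rw [ht, dif_pos hkN]
    have h1 : σ i ≤ σ ⟨k, hkN⟩ := hmono ⟨k, hkN⟩ i (le_refl _) (by rw [Fin.le_def]; exact hi)
    have h2 : 0 ≤ σ i := hnonneg _
    nlinarith
  set r : Fin N → ℝ := fun i => ∑ j, (G i j) ^ 2 with hr
  have hr0 : ∀ i, 0 ≤ r i := fun i => Finset.sum_nonneg fun j _ => sq_nonneg _
  have hr1 : ∀ i, r i ≤ 1 := fun i => row_bound G hGG i
  have hrsum : ∑ i, r i = (k : ℝ) := by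
    rw [hr]
    dsimp only
    rw [Finset.sum_comm]
    rw [Finset.sum_congr rfl fun j (_ : j ∈ Finset.univ) => col_norm G hGG j]
    simp
  have step1 : ∀ j : Fin k, (∑ i, σ i * (G i j) ^ 2) ^ 2 ≤ ∑ i, (σ i) ^ 2 * (G i j) ^ 2 :=
    fun j => jensen σ (fun i => G i j) (col_norm G hGG j)
  have step2 : ∑ j : Fin k, ∑ i, (σ i) ^ 2 * (G i j) ^ 2 = ∑ i, (σ i) ^ 2 * r i := by
    rw [Finset.sum_comm]
    exact Finset.sum_congr rfl fun i _ => by rw [hr]; dsimp only; rw [Finset.mul_sum]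
  have hχσ : ∑ j : Fin k, (σ (Fin.castLE hk j)) ^ 2
      = ∑ i : Fin N, (if (i : ℕ) < k then (σ i) ^ 2 else 0) := sum_castLE hk (fun i => (σ i) ^ 2)
  have hχ1 : ∑ i : Fin N, (if (i : ℕ) < k then (1 : ℝ) else 0) = (k : ℝ) := by
    rw [← sum_castLE hk (fun _ => (1 : ℝ))]
    simp
  have hterm : ∀ i : Fin N, 0 ≤ ((σ i) ^ 2 - t) * ((if (i : ℕ) < k then (1 : ℝ) else 0) - r i) := by
    intro i
    by_cases hi : (i : ℕ) < k
    · rw [if_pos hi]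
      have := ht_lo i hi
      have := hr1 i
      nlinarith
    · rw [if_neg hi]
      have := ht_hi i (le_of_not_gt hi)
      have := hr0 i
      nlinarith
  have hslack : ∑ i, ((σ i) ^ 2 - t) * ((if (i : ℕ) < k then (1 : ℝ) else 0) - r i)
      = ∑ j : Fin k, (σ (Fin.castLE hk j)) ^ 2 - ∑ i, (σ i) ^ 2 * r i := by
    have ex : ∀ i : Fin N, ((σ i) ^ 2 - t) * ((if (i : ℕ) < k then (1 : ℝ) else 0) - r i)
        = ((if (i : ℕ) < k then (σ i) ^ 2 else 0) - (σ i) ^ 2 * r i)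
          - (t * (if (i : ℕ) < k then (1 : ℝ) else 0) - t * r i) := by
      intro i
      by_cases hi : (i : ℕ) < k <;> simp [hi] <;> ring
    rw [Finset.sum_congr rfl fun i _ => ex i, Finset.sum_sub_distrib, Finset.sum_sub_distrib,
      Finset.sum_sub_distrib, ← Finset.mul_sum, ← Finset.mul_sum, hχ1, hrsum, hχσ]
    ring
  have hslack_nonneg : 0 ≤ ∑ i, ((σ i) ^ 2 - t) * ((if (i : ℕ) < k then (1 : ℝ) else 0) - r i) :=
    Finset.sum_nonneg fun i _ => hterm i
  have hAB : ∑ j : Fin k, (∑ i, σ i * (G i j) ^ 2) ^ 2 ≤ ∑ j : Fin k, ∑ i, (σ i) ^ 2 * (G i j) ^ 2 :=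
    Finset.sum_le_sum fun j _ => step1 j
  constructor
  · calc ∑ j : Fin k, (∑ i, σ i * (G i j) ^ 2) ^ 2
        ≤ ∑ j : Fin k, ∑ i, (σ i) ^ 2 * (G i j) ^ 2 := hAB
      _ = ∑ i, (σ i) ^ 2 * r i := step2
      _ ≤ ∑ j : Fin k, (σ (Fin.castLE hk j)) ^ 2 := by linarith [hslack ▸ hslack_nonneg]
  · intro heq
    have hCD : ∑ i, (σ i) ^ 2 * r i = ∑ j : Fin k, (σ (Fin.castLE hk j)) ^ 2 := by
      have h1 : ∑ i, (σ i) ^ 2 * r i ≤ ∑ j : Fin k, (σ (Fin.castLE hk j)) ^ 2 := by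
        linarith [hslack ▸ hslack_nonneg]
      have h2 : ∑ j : Fin k, (σ (Fin.castLE hk j)) ^ 2 ≤ ∑ i, (σ i) ^ 2 * r i := by
        rw [← heq, ← step2]; exact hAB
      linarith
    have hslack0 : ∀ i : Fin N,
        ((σ i) ^ 2 - t) * ((if (i : ℕ) < k then (1 : ℝ) else 0) - r i) = 0 := by
      have hsum0 : ∑ i, ((σ i) ^ 2 - t) * ((if (i : ℕ) < k then (1 : ℝ) else 0) - r i) = 0 := by
        rw [hslack, hCD]; ring
      intro i
      exact (Finset.sum_eq_zero_iff_of_nonneg fun i _ => hterm i).mp hsum0 i (Finset.mem_univ i)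
    have hrlt : ∀ i : Fin N, (i : ℕ) < k → r i = 1 := by
      intro i hi
      have h := hslack0 i
      rw [if_pos hi] at h
      have ht' := ht_lo i hi
      rcases mul_eq_zero.mp h with h' | h'
      · nlinarith
      · linarith
    have hrge : ∀ i : Fin N, k ≤ (i : ℕ) → r i = 0 := by
      have hsplit : ∑ i : Fin N, (if (i : ℕ) < k then (0 : ℝ) else r i) = 0 := by
        have e1 : ∑ i : Fin N, (if (i : ℕ) < k then (r i) else 0) = (k : ℝ) := by
          rw [← sum_castLE hk r]
          rw [Finset.sum_congr rfl fun j (_ : j ∈ Finset.univ) =>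
            hrlt (Fin.castLE hk j) j.isLt]
          simp
        have e2 : ∀ i : Fin N, (if (i : ℕ) < k then (0 : ℝ) else r i)
            = r i - (if (i : ℕ) < k then (r i) else 0) := by
          intro i; by_cases hi : (i : ℕ) < k <;> simp [hi]
        rw [Finset.sum_congr rfl fun i _ => e2 i, Finset.sum_sub_distrib, e1, hrsum]
        ring
      intro i hi
      have h := (Finset.sum_eq_zero_iff_of_nonneg (fun i _ => by
        by_cases hi' : (i : ℕ) < k <;> simp [hi', hr0 i])).mp hsplit i (Finset.mem_univ i)
      rwa [if_neg (not_lt.mpr hi)] at h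
    constructor
    · intro i j hi
      have h1 : (G i j) ^ 2 ≤ r i :=
        Finset.single_le_sum (f := fun j => (G i j) ^ 2) (fun j _ => sq_nonneg _)
          (Finset.mem_univ j)
      have h2 := sq_nonneg (G i j)
      have := hrge i hi
      have h3 : (G i j) ^ 2 = 0 := by linarith
      exact pow_eq_zero_iff two_ne_zero |>.mp h3
    · intro j
      have hsum0 : ∑ j : Fin k, (∑ i, (σ i) ^ 2 * (G i j) ^ 2 - (∑ i, σ i * (G i j) ^ 2) ^ 2) = 0 := by
        rw [Finset.sum_sub_distrib, step2, hCD, heq]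
        ring
      have h := (Finset.sum_eq_zero_iff_of_nonneg fun j _ => by
        linarith [step1 j]).mp hsum0 j (Finset.mem_univ j)
      linarith


/-- **exact feature identifiability after sign correction.**
Let `Ā = U Σ Uᵀ` be symmetric PSD with `U` orthogonal and
`σ₁ > … > σ_k > σ_{k+1} ≥ … ≥ σ_N ≥ 0`, `σ_k > 0`. Given reference indices
`x₀ j` with `U (x₀ j) j ≠ 0` for each of the first `k` columns `j`, there is exactly one
pair `(F, s)` (with `S = diag s`) minimizing `‖Ā − F S Fᵀ‖_F²` subject to `FᵀF = I_k`,
`s` nonincreasing and nonnegative, and the sign-fixing constraint `F (x₀ j) j > 0`. -/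
theorem stmt_2 {N k : ℕ} (hk : k ≤ N)
    (Abar U : Matrix (Fin N) (Fin N) ℝ) (σ : Fin N → ℝ)
    (hUorth : Uᵀ * U = 1)
    (hA : Abar = U * Matrix.diagonal σ * Uᵀ)
    (hstrict : ∀ i j : Fin N, i < j → (j : ℕ) ≤ k → σ j < σ i)
    (hmono : ∀ i j : Fin N, k ≤ (i : ℕ) → i ≤ j → σ j ≤ σ i)
    (hnonneg : ∀ i : Fin N, 0 ≤ σ i)
    (hpos : ∀ i : Fin N, (i : ℕ) < k → 0 < σ i)
    (x₀ : Fin k → Fin N)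
    (hx₀ : ∀ j : Fin k, U (x₀ j) (Fin.castLE hk j) ≠ 0) :
    ∃! p : Matrix (Fin N) (Fin k) ℝ × (Fin k → ℝ),
      (p.1ᵀ * p.1 = 1 ∧ (∀ i j : Fin k, i ≤ j → p.2 j ≤ p.2 i) ∧ (∀ i : Fin k, 0 ≤ p.2 i) ∧
        (∀ j : Fin k, 0 < p.1 (x₀ j) j)) ∧
      (∀ q : Matrix (Fin N) (Fin k) ℝ × (Fin k → ℝ),
        (q.1ᵀ * q.1 = 1 ∧ (∀ i j : Fin k, i ≤ j → q.2 j ≤ q.2 i) ∧ (∀ i : Fin k, 0 ≤ q.2 i) ∧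
          (∀ j : Fin k, 0 < q.1 (x₀ j) j)) →
        frobSq (Abar - p.1 * Matrix.diagonal p.2 * p.1ᵀ) ≤
          frobSq (Abar - q.1 * Matrix.diagonal q.2 * q.1ᵀ)) := by
  subst hA
  set e : Fin k → Fin N := Fin.castLE hk with he
  set ε : Fin k → ℝ := fun j => if 0 < U (x₀ j) (e j) then (1 : ℝ) else -1 with hε
  have hε2 : ∀ j, (ε j) ^ 2 = 1 := by
    intro j; rw [hε]; dsimp only; split <;> norm_num
  have hεpos : ∀ j, 0 < ε j * U (x₀ j) (e j) := by
    intro j; rw [hε]; dsimp only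
    rcases lt_trichotomy (U (x₀ j) (e j)) 0 with h | h | h
    · rw [if_neg (by linarith)]; nlinarith
    · exact absurd h (hx₀ j)
    · rw [if_pos h]; linarith
  set Fs : Matrix (Fin N) (Fin k) ℝ := Matrix.of (fun i j => ε j * U i (e j)) with hFs
  set ss : Fin k → ℝ := fun j => σ (e j) with hss
  have hUcol : ∀ m m' : Fin N, ∑ i, U i m * U i m' = if m = m' then (1 : ℝ) else 0 := by
    intro m m'
    have h := congrFun (congrFun hUorth m) m'
    simp only [Matrix.mul_apply, Matrix.transpose_apply, Matrix.one_apply] at h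
    exact h
  have heinj : Function.Injective e := Fin.castLE_injective hk
  -- σ is globally nonincreasing
  have hσle : ∀ i j : Fin N, i ≤ j → σ j ≤ σ i := by
    intro i j hij
    rcases eq_or_lt_of_le hij with rfl | hlt
    · exact le_refl _
    rcases le_or_gt (j : ℕ) k with hjk | hjk
    · exact (hstrict i j hlt hjk).le
    rcases le_or_gt k (i : ℕ) with hik | hik
    · exact hmono i j hik hij
    · have hkN : k < N := lt_of_lt_of_le hjk (Nat.le_of_lt_succ (Nat.lt_succ_of_lt j.isLt))
      have h1 : σ j ≤ σ ⟨k, hkN⟩ := hmono ⟨k, hkN⟩ j (le_refl _) (by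
        rw [Fin.le_def]; exact hjk.le)
      have h2 : σ ⟨k, hkN⟩ < σ i := hstrict i ⟨k, hkN⟩ (by rw [Fin.lt_def]; exact hik)
        (le_refl _)
      linarith
  -- pivot value
  set t : ℝ := if h : k < N then (σ ⟨k, h⟩) ^ 2 else 0 with ht
  have ht_lo : ∀ i : Fin N, (i : ℕ) < k → t < (σ i) ^ 2 := by
    intro i hi
    rw [ht]
    split
    · next h =>
      have h1 : σ ⟨k, h⟩ < σ i := hstrict i ⟨k, h⟩ (by rw [Fin.lt_def]; exact hi) (le_refl _)
      have h2 : 0 ≤ σ ⟨k, h⟩ := hnonneg _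
      nlinarith
    · exact pow_pos (hpos i hi) 2
  have ht_hi : ∀ i : Fin N, k ≤ (i : ℕ) → (σ i) ^ 2 ≤ t := by
    intro i hi
    have hkN : k < N := lt_of_le_of_lt hi i.isLt
    rw [ht, dif_pos hkN]
    have h1 : σ i ≤ σ ⟨k, hkN⟩ := hmono ⟨k, hkN⟩ i (le_refl _) (by rw [Fin.le_def]; exact hi)
    have h2 : 0 ≤ σ i := hnonneg _
    nlinarith
  -- the candidate is feasible
  have hFsG : ∀ i j, (Uᵀ * Fs) i j = ε j * (if i = e j then 1 else 0) := by
    intro i j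
    simp only [Matrix.mul_apply, Matrix.transpose_apply, hFs, Matrix.of_apply]
    rw [show (∑ m, U m i * (ε j * U m (e j))) = ε j * ∑ m, U m i * U m (e j) from by
      rw [Finset.mul_sum]; exact Finset.sum_congr rfl fun m _ => by ring]
    rw [hUcol i (e j)]
  have hFsorth : Fsᵀ * Fs = 1 := by
    ext j l
    simp only [Matrix.mul_apply, Matrix.transpose_apply, hFs, Matrix.of_apply, Matrix.one_apply]
    rw [show (∑ i, ε j * U i (e j) * (ε l * U i (e l)))
        = ε j * ε l * ∑ i, U i (e j) * U i (e l) from by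
      rw [Finset.mul_sum]; exact Finset.sum_congr rfl fun i _ => by ring]
    rw [hUcol (e j) (e l)]
    by_cases hjl : j = l
    · subst hjl; rw [if_pos rfl, if_pos rfl, mul_one, ← sq, hε2]
    · rw [if_neg (fun h => hjl (heinj h)), if_neg hjl, mul_zero]
  have hcs : ∀ j, (∑ i, σ i * ((Uᵀ * Fs) i j) ^ 2) = σ (e j) := by
    intro j
    have : ∀ i, σ i * ((Uᵀ * Fs) i j) ^ 2 = if i = e j then σ i else 0 := by
      intro i
      rw [hFsG, mul_pow, hε2]
      split <;> simp
    rw [Finset.sum_congr rfl fun i _ => this i, Finset.sum_ite_eq' Finset.univ (e j) σ,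
      if_pos (Finset.mem_univ _)]
  have hvalp : frobSq (U * Matrix.diagonal σ * Uᵀ - Fs * Matrix.diagonal ss * Fsᵀ)
      = frobSq (U * Matrix.diagonal σ * Uᵀ) - ∑ j : Fin k, (σ (e j)) ^ 2 := by
    rw [val_eq U σ hUorth Fs ss hFsorth]
    simp only [hcs, hss]
    simp
  -- the lower bound for any feasible F
  have hUU : U * Uᵀ = 1 := mul_eq_one_comm.mp hUorth
  have hGGgen : ∀ F : Matrix (Fin N) (Fin k) ℝ, Fᵀ * F = 1 → (Uᵀ * F)ᵀ * (Uᵀ * F) = 1 := by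
    intro F hF
    calc (Uᵀ * F)ᵀ * (Uᵀ * F) = Fᵀ * ((U * Uᵀ) * F) := by
          rw [Matrix.transpose_mul, Matrix.transpose_transpose]
          noncomm_ring [Matrix.mul_assoc]
      _ = 1 := by rw [hUU, Matrix.one_mul, hF]
  have hlb : ∀ F : Matrix (Fin N) (Fin k) ℝ, Fᵀ * F = 1 →
      ∑ j : Fin k, (∑ i, σ i * ((Uᵀ * F) i j) ^ 2) ^ 2 ≤ ∑ j : Fin k, (σ (e j)) ^ 2 := by
    intro F hF
    exact (chain hk σ hstrict hmono hnonneg hpos (Uᵀ * F) (hGGgen F hF)).1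
  have hssmono : ∀ i j : Fin k, i ≤ j → ss j ≤ ss i := by
    intro i j hij
    rcases eq_or_lt_of_le hij with rfl | hlt
    · exact le_refl _
    · exact (hstrict (e i) (e j) (by rw [he]; exact hlt) (by
        rw [he]; exact (j.isLt).le)).le
  have hssnn : ∀ i : Fin k, 0 ≤ ss i := fun i => hnonneg _
  have hsssign : ∀ j : Fin k, 0 < Fs (x₀ j) j := fun j => hεpos j
  refine ⟨⟨Fs, ss⟩, ⟨⟨hFsorth, hssmono, hssnn, hsssign⟩, ?_⟩, ?_⟩
  · -- minimality
    rintro q ⟨hqF, -, -, -⟩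
    rw [hvalp, val_eq U σ hUorth q.1 q.2 hqF]
    have h1 : 0 ≤ ∑ j : Fin k, (q.2 j - ∑ i, σ i * ((Uᵀ * q.1) i j) ^ 2) ^ 2 :=
      Finset.sum_nonneg fun j _ => sq_nonneg _
    have h2 := hlb q.1 hqF
    linarith
  · -- uniqueness
    rintro ⟨F, s⟩ ⟨⟨hqF, hqmono, hqnn, hqsign⟩, hqmin⟩
    set G := Uᵀ * F with hGdef
    have hGG : Gᵀ * G = 1 := hGGgen F hqF
    have hle1 := hqmin (Fs, ss) ⟨hFsorth, hssmono, hssnn, hsssign⟩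
    have hle2 : frobSq (U * Matrix.diagonal σ * Uᵀ - Fs * Matrix.diagonal ss * Fsᵀ)
        ≤ frobSq (U * Matrix.diagonal σ * Uᵀ - F * Matrix.diagonal s * Fᵀ) := by
      rw [hvalp, val_eq U σ hUorth F s hqF]
      have h1 := hlb F hqF
      have h2 : 0 ≤ ∑ j : Fin k, (s j - ∑ i, σ i * ((Uᵀ * F) i j) ^ 2) ^ 2 :=
        Finset.sum_nonneg fun j _ => sq_nonneg _
      linarith
    have heqv : frobSq (U * Matrix.diagonal σ * Uᵀ - F * Matrix.diagonal s * Fᵀ)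
        = frobSq (U * Matrix.diagonal σ * Uᵀ) - ∑ j : Fin k, (σ (e j)) ^ 2 := by
      rw [← hvalp]; exact le_antisymm hle1 hle2
    rw [val_eq U σ hUorth F s hqF] at heqv
    have h1 := hlb F hqF
    have h2 : 0 ≤ ∑ j : Fin k, (s j - ∑ i, σ i * ((Uᵀ * F) i j) ^ 2) ^ 2 :=
      Finset.sum_nonneg fun j _ => sq_nonneg _
    have hcsq : ∑ j : Fin k, (∑ i, σ i * (G i j) ^ 2) ^ 2 = ∑ j : Fin k, (σ (e j)) ^ 2 := by
      rw [hGdef]; linarith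
    have hsc0 : ∑ j : Fin k, (s j - ∑ i, σ i * (G i j) ^ 2) ^ 2 = 0 := by
      rw [hGdef]; linarith
    have hsc : ∀ j : Fin k, s j = ∑ i, σ i * (G i j) ^ 2 := by
      intro j
      have h := (Finset.sum_eq_zero_iff_of_nonneg fun j _ => sq_nonneg _).mp hsc0 j
        (Finset.mem_univ j)
      have := pow_eq_zero_iff two_ne_zero |>.mp h
      linarith [sub_eq_zero.mp this]
    obtain ⟨hGzero, hJen⟩ :=
      (chain hk σ hstrict hmono hnonneg hpos G hGG).2 (by rw [he] at hcsq; exact hcsq)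
    -- per column support
    have key : ∀ j : Fin k, ∃ i0 : Fin N, (i0 : ℕ) < k ∧ σ i0 = ∑ i, σ i * (G i j) ^ 2 ∧
        ∀ i, i ≠ i0 → G i j = 0 := by
      intro j
      have hvar : ∑ i, (G i j) ^ 2 * (σ i - ∑ i', σ i' * (G i' j) ^ 2) ^ 2 = 0 := by
        have ex : ∀ i, (G i j) ^ 2 * (σ i - ∑ i', σ i' * (G i' j) ^ 2) ^ 2
            = (σ i) ^ 2 * (G i j) ^ 2
              - 2 * (∑ i', σ i' * (G i' j) ^ 2) * (σ i * (G i j) ^ 2)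
              + (∑ i', σ i' * (G i' j) ^ 2) ^ 2 * (G i j) ^ 2 := fun i => by ring
        rw [Finset.sum_congr rfl fun i _ => ex i, Finset.sum_add_distrib,
          Finset.sum_sub_distrib, ← Finset.mul_sum, ← Finset.mul_sum, col_norm G hGG j,
          hJen j]
        ring
      have hall := (Finset.sum_eq_zero_iff_of_nonneg fun i _ =>
        mul_nonneg (sq_nonneg _) (sq_nonneg _)).mp hvar
      have hval0 : ∀ i : Fin N, G i j ≠ 0 → σ i = ∑ i', σ i' * (G i' j) ^ 2 := by
        intro i hne
        have h := hall i (Finset.mem_univ i)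
        rcases mul_eq_zero.mp h with h' | h'
        · exact absurd (pow_eq_zero_iff two_ne_zero |>.mp h') hne
        · exact sub_eq_zero.mp (pow_eq_zero_iff two_ne_zero |>.mp h')
      have hex : ∃ i0, G i0 j ≠ 0 := by
        by_contra hno
        push_neg at hno
        have h := col_norm G hGG j
        rw [Finset.sum_eq_zero (fun i _ => by rw [hno i]; ring)] at h
        norm_num at h
      obtain ⟨i0, hi0⟩ := hex
      have hi0k : (i0 : ℕ) < k := by
        by_contra hge
        exact hi0 (hGzero i0 j (le_of_not_gt hge))
      refine ⟨i0, hi0k, hval0 i0 hi0, ?_⟩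
      intro i hne
      by_contra hGi
      have hik : (i : ℕ) < k := by
        by_contra hge
        exact hGi (hGzero i j (le_of_not_gt hge))
      have hσeq : σ i = σ i0 := by rw [hval0 i hGi, hval0 i0 hi0]
      rcases lt_trichotomy i i0 with h | h | h
      · have := hstrict i i0 h hi0k.le
        rw [hσeq] at this
        exact lt_irrefl _ this
      · exact hne h
      · have := hstrict i0 i h hik.le
        rw [hσeq] at this
        exact lt_irrefl _ this
    choose π hπk hπσ hπ0 using key
    have hπsq : ∀ j, (G (π j) j) ^ 2 = 1 := by
      intro j
      have h := col_norm G hGG j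
      rw [Finset.sum_eq_single (π j)] at h
      · exact h
      · intro i _ hne
        rw [hπ0 j i hne]
        ring
      · intro h'
        exact absurd (Finset.mem_univ _) h'
    have hπne : ∀ j, G (π j) j ≠ 0 := by
      intro j h
      have := hπsq j
      rw [h] at this
      norm_num at this
    have hπlt : ∀ j l : Fin k, j < l → π j < π l := by
      intro j l hjl
      have hππ : π j ≠ π l := by
        intro hpp
        have horth := orth_entry G hGG j l (ne_of_lt hjl)
        rw [Finset.sum_eq_single (π j)] at horth
        · exact (mul_ne_zero (hπne j) (by rw [hpp]; exact hπne l)) horth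
        · intro i _ hne
          rw [hπ0 j i hne]
          ring
        · intro h'
          exact absurd (Finset.mem_univ _) h'
      have hsl : s l ≤ s j := hqmono j l (le_of_lt hjl)
      rw [hsc j, hsc l, ← hπσ j, ← hπσ l] at hsl
      rcases lt_trichotomy (π j) (π l) with h | h | h
      · exact h
      · exact absurd h hππ
      · have := hstrict (π l) (π j) h (hπk j).le
        linarith
    have hπe : ∀ j, π j = e j := by
      have hmonoπ' : StrictMono (fun j : Fin k => (⟨(π j : ℕ), hπk j⟩ : Fin k)) := by
        intro a b hab
        have := hπlt a b hab
        rw [Fin.lt_def] at this ⊢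
        exact this
      intro j
      have h1 : (⟨(π j : ℕ), hπk j⟩ : Fin k) = j :=
        le_antisymm
          (@StrictMono.apply_le (Fin k) _ (inferInstance : WellFoundedGT (Fin k)) _ hmonoπ' j)
          (@StrictMono.le_apply (Fin k) _ (inferInstance : WellFoundedLT (Fin k)) _ hmonoπ' j)
      have h2 : (π j : ℕ) = (j : ℕ) := congrArg Fin.val h1
      rw [Fin.ext_iff]
      rw [h2, he]
      rfl
    have hs : s = ss := by
      funext j
      rw [hsc j, ← hπσ j, hπe j, hss]
    have hFU : F = U * G := by
      rw [hGdef, ← Matrix.mul_assoc, hUU, Matrix.one_mul]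
    have hGsign : ∀ j, G (e j) j = ε j := by
      intro j
      have hsq : (G (e j) j) ^ 2 = 1 := by
        rw [← hπe j]
        exact hπsq j
      have hsign : 0 < U (x₀ j) (e j) * G (e j) j := by
        have h : 0 < F (x₀ j) j := hqsign j
        rw [hFU] at h
        rw [show (U * G) (x₀ j) j = U (x₀ j) (e j) * G (e j) j from ?_] at h
        · exact h
        rw [Matrix.mul_apply, Finset.sum_eq_single (e j)]
        · intro i _ hne
          rw [hπ0 j i (by rw [hπe j]; exact hne), mul_zero]
        · intro h'
          exact absurd (Finset.mem_univ _) h'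
      have hfac : (G (e j) j - 1) * (G (e j) j + 1) = 0 := by linear_combination hsq
      rw [hε]
      dsimp only
      by_cases hU0 : 0 < U (x₀ j) (e j)
      · rw [if_pos hU0]
        have hGpos : 0 < G (e j) j := by
          rcases mul_pos_iff.mp hsign with ⟨-, hb⟩ | ⟨ha, -⟩
          · exact hb
          · linarith
        rcases mul_eq_zero.mp hfac with h' | h'
        · linarith [sub_eq_zero.mp h']
        · have : G (e j) j = -1 := by linarith
          linarith
      · rw [if_neg hU0]
        have hUneg : U (x₀ j) (e j) < 0 := lt_of_le_of_ne (not_lt.mp hU0) (hx₀ j)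
        have hGneg : G (e j) j < 0 := by
          rcases mul_pos_iff.mp hsign with ⟨ha, -⟩ | ⟨-, hb⟩
          · exact absurd ha (not_lt.mpr hUneg.le)
          · exact hb
        rcases mul_eq_zero.mp hfac with h' | h'
        · have : G (e j) j = 1 := by linarith [sub_eq_zero.mp h']
          linarith
        · linarith
    have hFeq : F = Fs := by
      rw [hFU]
      ext i j
      rw [Matrix.mul_apply, Finset.sum_eq_single (e j)]
      · rw [hGsign j, hFs]
        simp [mul_comm]
      · intro m _ hne
        rw [hπ0 j m (by rw [hπe j]; exact hne), mul_zero]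
      · intro h'
        exact absurd (Finset.mem_univ _) h'
    rw [Prod.ext_iff]
    exact ⟨hFeq, hs⟩
end

section
/- Let P̄ ∈ ℝ^{M×N} have singular value decomposition P̄ = UΣVᵀ with singular values σ₁ > σ₂ > … > σ_k > σ_{k+1} ≥ … ≥ 0 and σ_k > 0 (the k largest singular values are positive, pairwise distinct, and strictly larger than the (k+1)-st). Then over all triples (F_A, S, F_B) with F_A ∈ ℝ^{M×k} and F_B ∈ ℝ^{N×k} satisfying F_AᵀF_A = F_BᵀF_B = I_k and S = diag(s₁,…,s_k) with s₁ ≥ … ≥ s_k ≥ 0, the minimizers of ‖P̄ − F_A S F_Bᵀ‖_F² are exactly the triples with S = diag(σ₁,…,σ_k), F_A = U^k E, and F_B = V^k E for some diagonal matrix E with diagonal entries in {+1, −1} (the same E for both factors). -/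
open Matrix BigOperators

open Finset

/-- Abel summation identity. -/
lemma abel_id (s c : ℕ → ℝ) (n : ℕ) :
    ∑ j ∈ range n, s j * c j =
      ∑ b ∈ range n, (s b - s (b+1)) * (∑ j ∈ range (b+1), c j)
        + s n * ∑ j ∈ range n, c j := by
  induction n with
  | zero => simp
  | succ n ih =>
    rw [Finset.sum_range_succ, ih, Finset.sum_range_succ (fun b => (s b - s (b+1)) * _)]
    rw [Finset.sum_range_succ c]
    ring

/-- Greedy bound. -/
lemma greedy_le (σ r : ℕ → ℝ) (n b : ℕ) (hb : b ≤ n)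
    (hσmono : ∀ i j, i ≤ j → σ j ≤ σ i) (hσ0 : ∀ i, 0 ≤ σ i)
    (hr0 : ∀ i, 0 ≤ r i) (hr1 : ∀ i, r i ≤ 1)
    (hsum : ∑ i ∈ range n, r i ≤ (b : ℝ)) :
    ∑ i ∈ range n, σ i * r i ≤ ∑ i ∈ range b, σ i := by
  have hsplit : ∑ i ∈ range n, σ i * r i
      = ∑ i ∈ range b, σ i * r i + ∑ i ∈ Ico b n, σ i * r i := by
    rw [Finset.sum_range_add_sum_Ico _ hb]
  have htail : ∑ i ∈ Ico b n, σ i * r i ≤ σ b * ∑ i ∈ Ico b n, r i := by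
    rw [Finset.mul_sum]
    apply Finset.sum_le_sum
    intro i hi
    have := Finset.mem_Ico.mp hi
    exact mul_le_mul_of_nonneg_right (hσmono b i this.1) (hr0 i)
  have hIco : ∑ i ∈ Ico b n, r i ≤ (b : ℝ) - ∑ i ∈ range b, r i := by
    have := Finset.sum_range_add_sum_Ico r hb
    linarith
  have h2 : σ b * ∑ i ∈ Ico b n, r i ≤ σ b * ((b:ℝ) - ∑ i ∈ range b, r i) :=
    mul_le_mul_of_nonneg_left hIco (hσ0 b)
  have h3 : ∑ i ∈ range b, σ i * r i + σ b * ((b:ℝ) - ∑ i ∈ range b, r i)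
      ≤ ∑ i ∈ range b, σ i := by
    have : ∑ i ∈ range b, σ i * r i + σ b * ((b:ℝ) - ∑ i ∈ range b, r i)
        = ∑ i ∈ range b, ((σ i - σ b) * r i + σ b) := by
      rw [Finset.sum_add_distrib]
      rw [Finset.sum_const, Finset.card_range, nsmul_eq_mul]
      have : ∀ x ∈ range b, (σ x - σ b) * r x = σ x * r x - σ b * r x := by
        intro x _; ring
      rw [Finset.sum_congr rfl this, Finset.sum_sub_distrib, ← Finset.mul_sum]
      ring
    rw [this]
    apply Finset.sum_le_sum
    intro i hi
    have hib : i ≤ b := le_of_lt (Finset.mem_range.mp hi)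
    have h4 : (σ i - σ b) * r i ≤ (σ i - σ b) * 1 :=
      mul_le_mul_of_nonneg_left (hr1 i) (by have := hσmono i b hib; linarith)
    linarith
  linarith

/-- Greedy bound, equality case. -/
lemma greedy_eq (σ r : ℕ → ℝ) (n b : ℕ) (hb : b ≤ n)
    (hσmono : ∀ i j, i ≤ j → σ j ≤ σ i) (hσ0 : ∀ i, 0 ≤ σ i)
    (hr0 : ∀ i, 0 ≤ r i) (hr1 : ∀ i, r i ≤ 1)
    (hsum : ∑ i ∈ range n, r i ≤ (b : ℝ))
    (hstrictb : ∀ i, i < b → σ b < σ i)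
    (heq : ∑ i ∈ range n, σ i * r i = ∑ i ∈ range b, σ i) :
    (∀ i, i < b → r i = 1) ∧ (0 < σ b → ∑ i ∈ range n, r i = (b:ℝ)) := by
  have hsplit : ∑ i ∈ range n, σ i * r i
      = ∑ i ∈ range b, σ i * r i + ∑ i ∈ Ico b n, σ i * r i := by
    rw [Finset.sum_range_add_sum_Ico _ hb]
  have hrsplit : ∑ i ∈ range n, r i
      = ∑ i ∈ range b, r i + ∑ i ∈ Ico b n, r i := by
    rw [Finset.sum_range_add_sum_Ico _ hb]
  have htail : ∑ i ∈ Ico b n, σ i * r i ≤ σ b * ∑ i ∈ Ico b n, r i := by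
    rw [Finset.mul_sum]
    apply Finset.sum_le_sum
    intro i hi
    have := Finset.mem_Ico.mp hi
    exact mul_le_mul_of_nonneg_right (hσmono b i this.1) (hr0 i)
  have hIco : ∑ i ∈ Ico b n, r i ≤ (b : ℝ) - ∑ i ∈ range b, r i := by linarith
  have h2 : σ b * ∑ i ∈ Ico b n, r i ≤ σ b * ((b:ℝ) - ∑ i ∈ range b, r i) :=
    mul_le_mul_of_nonneg_left hIco (hσ0 b)
  have hkey : ∑ i ∈ range b, σ i * r i + σ b * ((b:ℝ) - ∑ i ∈ range b, r i)
      = ∑ i ∈ range b, ((σ i - σ b) * r i) + (b:ℝ) * σ b := by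
    have : ∀ x ∈ range b, (σ x - σ b) * r x = σ x * r x - σ b * r x := by
      intro x _; ring
    rw [Finset.sum_congr rfl this, Finset.sum_sub_distrib, ← Finset.mul_sum]
    ring
  have h3 : ∑ i ∈ range b, ((σ i - σ b) * r i) ≤ ∑ i ∈ range b, (σ i - σ b) := by
    apply Finset.sum_le_sum
    intro i hi
    have hib : i ≤ b := le_of_lt (Finset.mem_range.mp hi)
    have h4 : (σ i - σ b) * r i ≤ (σ i - σ b) * 1 :=
      mul_le_mul_of_nonneg_left (hr1 i) (by have := hσmono i b hib; linarith)
    linarith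
  have hsb : ∑ i ∈ range b, (σ i - σ b) = ∑ i ∈ range b, σ i - (b:ℝ) * σ b := by
    rw [Finset.sum_sub_distrib, Finset.sum_const, Finset.card_range, nsmul_eq_mul]
  -- sandwich
  have hA : ∑ i ∈ range b, σ i * r i + ∑ i ∈ Ico b n, σ i * r i = ∑ i ∈ range b, σ i := by
    rw [← hsplit]; exact heq
  have hall : ∑ i ∈ range b, ((σ i - σ b) * r i) = ∑ i ∈ range b, (σ i - σ b)
      ∧ σ b * ∑ i ∈ Ico b n, r i = σ b * ((b:ℝ) - ∑ i ∈ range b, r i) := by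
    constructor <;> linarith
  constructor
  · intro i hib
    have hzero : ∑ i ∈ range b, ((σ i - σ b) * (1 - r i)) = 0 := by
      have : ∀ x ∈ range b, (σ x - σ b) * (1 - r x)
          = (σ x - σ b) - (σ x - σ b) * r x := by intro x _; ring
      rw [Finset.sum_congr rfl this, Finset.sum_sub_distrib, hall.1, sub_self]
    have hterm := (Finset.sum_eq_zero_iff_of_nonneg ?_).mp hzero i (Finset.mem_range.mpr hib)
    · have hpos : 0 < σ i - σ b := by have := hstrictb i hib; linarith
      have := mul_eq_zero.mp hterm
      rcases this with h | h
      · linarith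
      · linarith
    · intro x hx
      have hxb := Finset.mem_range.mp hx
      have h5 := hstrictb x hxb
      have h6 := hr1 x
      nlinarith
  · intro hσb
    have := hall.2
    have h7 : (∑ i ∈ Ico b n, r i) = ((b:ℝ) - ∑ i ∈ range b, r i) :=
      mul_left_cancel₀ (ne_of_gt hσb) this
    linarith



lemma frobSq_eq_trace {m n : Type*} [Fintype m] [Fintype n] (X : Matrix m n ℝ) :
    frobSq X = Matrix.trace (Xᵀ * X) := by
  rw [Matrix.trace, frobSq, Finset.sum_comm]
  apply Finset.sum_congr rfl
  intro j _
  rw [Matrix.diag_apply, Matrix.mul_apply]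
  apply Finset.sum_congr rfl
  intro i _
  rw [Matrix.transpose_apply]; ring

lemma frobSq_conj {m n : Type*} [Fintype m] [Fintype n] [DecidableEq m] [DecidableEq n]
    (U : Matrix m m ℝ) (V : Matrix n n ℝ) (hU : Uᵀ * U = 1) (hV : Vᵀ * V = 1)
    (X : Matrix m n ℝ) : frobSq (Uᵀ * X * V) = frobSq X := by
  have hUU : U * Uᵀ = 1 := mul_eq_one_comm.mp hU
  rw [frobSq_eq_trace, frobSq_eq_trace]
  have h1 : (Uᵀ * X * V)ᵀ * (Uᵀ * X * V) = Vᵀ * (Xᵀ * X) * V := by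
    rw [Matrix.transpose_mul, Matrix.transpose_mul, Matrix.transpose_transpose]
    calc Vᵀ * (Xᵀ * U) * (Uᵀ * X * V) = Vᵀ * Xᵀ * (U * Uᵀ) * X * V := by
          simp only [Matrix.mul_assoc]
      _ = Vᵀ * (Xᵀ * X) * V := by rw [hUU]; simp only [Matrix.mul_assoc, Matrix.one_mul]
  rw [h1, Matrix.trace_mul_comm, ← Matrix.mul_assoc, mul_eq_one_comm.mp hV,
    Matrix.one_mul]

lemma frobSq_sub_expand {m n : Type*} [Fintype m] [Fintype n] (A B : Matrix m n ℝ) :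
    frobSq (A - B) = frobSq A - 2 * (∑ i, ∑ j, A i j * B i j) + frobSq B := by
  simp only [frobSq, Matrix.sub_apply, Finset.mul_sum, ← Finset.sum_add_distrib,
    ← Finset.sum_sub_distrib]
  apply Finset.sum_congr rfl; intro i _
  apply Finset.sum_congr rfl; intro j _
  ring

lemma frobSq_GSH {m n k : Type*} [Fintype m] [Fintype n] [Fintype k] [DecidableEq k]
    (G : Matrix m k ℝ) (H : Matrix n k ℝ) (s : k → ℝ)
    (hG : Gᵀ * G = 1) (hH : Hᵀ * H = 1) :
    frobSq (G * Matrix.diagonal s * Hᵀ) = ∑ j, (s j)^2 := by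
  rw [frobSq_eq_trace]
  have h1 : (G * Matrix.diagonal s * Hᵀ)ᵀ * (G * Matrix.diagonal s * Hᵀ)
      = H * (Matrix.diagonal s * Matrix.diagonal s) * Hᵀ := by
    rw [Matrix.transpose_mul, Matrix.transpose_mul, Matrix.transpose_transpose,
      Matrix.diagonal_transpose]
    calc H * (Matrix.diagonal s * Gᵀ) * (G * Matrix.diagonal s * Hᵀ)
        = H * Matrix.diagonal s * (Gᵀ * G) * Matrix.diagonal s * Hᵀ := by
          simp only [Matrix.mul_assoc]
      _ = H * (Matrix.diagonal s * Matrix.diagonal s) * Hᵀ := by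
          rw [hG]; simp only [Matrix.mul_assoc, Matrix.mul_one]
  rw [h1, Matrix.trace_mul_comm, ← Matrix.mul_assoc, hH, Matrix.one_mul,
    Matrix.diagonal_mul_diagonal, Matrix.trace_diagonal]
  apply Finset.sum_congr rfl; intro j _; ring

lemma row_sq_le_one {m k : Type*} [Fintype m] [Fintype k] [DecidableEq k]
    (G : Matrix m k ℝ) (hG : Gᵀ * G = 1) (i : m) : ∑ j, (G i j)^2 ≤ 1 := by
  set Pm := G * Gᵀ with hPm
  have hidem : Pm * Pm = Pm := by
    rw [hPm]
    calc G * Gᵀ * (G * Gᵀ) = G * (Gᵀ * G) * Gᵀ := by simp only [Matrix.mul_assoc]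
      _ = G * Gᵀ := by rw [hG, Matrix.mul_one]
  have hsym : ∀ a b, Pm a b = Pm b a := by
    intro a b
    rw [hPm, Matrix.mul_apply, Matrix.mul_apply]
    apply Finset.sum_congr rfl
    intro j _; rw [Matrix.transpose_apply, Matrix.transpose_apply]; ring
  have ht : Pm i i = ∑ j, (G i j)^2 := by
    rw [hPm, Matrix.mul_apply]
    apply Finset.sum_congr rfl
    intro j _; rw [Matrix.transpose_apply]; ring
  have ht0 : 0 ≤ Pm i i := by
    rw [ht]; positivity
  have hsq : (Pm i i)^2 ≤ Pm i i := by
    conv_rhs => rw [← hidem]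
    rw [Matrix.mul_apply]
    have : (Pm i i)^2 = Pm i i * Pm i i := sq (Pm i i) ▸ by ring
    rw [this]
    apply Finset.single_le_sum (f := fun l => Pm i l * Pm l i) ?_ (Finset.mem_univ i)
    intro l _
    show 0 ≤ Pm i l * Pm l i
    rw [hsym l i]
    exact mul_self_nonneg _
  have : Pm i i ≤ 1 := by nlinarith
  rw [← ht]; exact this

lemma pair_sum {M N : ℕ} (F : Fin M → Fin N → ℝ) (F' : ℕ → ℝ)
    (hF' : ∀ (i : Fin M) (i' : Fin N), (i : ℕ) = (i' : ℕ) → F i i' = F' (i : ℕ)) :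
    ∑ i : Fin M, ∑ i' : Fin N, (if (i : ℕ) = (i' : ℕ) then F i i' else 0)
      = ∑ i ∈ range (min M N), F' i := by
  have hinner : ∀ i : Fin M, (∑ i' : Fin N, (if (i : ℕ) = (i' : ℕ) then F i i' else 0))
      = if (i : ℕ) < N then F' (i : ℕ) else 0 := by
    intro i
    by_cases h : (i : ℕ) < N
    · rw [if_pos h]
      rw [Finset.sum_eq_single_of_mem (⟨(i : ℕ), h⟩ : Fin N) (Finset.mem_univ _)]
      · rw [if_pos rfl]
        exact hF' i _ rfl
      · intro i' _ hne
        rw [if_neg]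
        intro hc
        exact hne (Fin.ext hc.symm)
    · rw [if_neg h]
      apply Finset.sum_eq_zero
      intro i' _
      rw [if_neg]
      intro hc
      exact h (hc ▸ i'.isLt)
  rw [Finset.sum_congr rfl (fun i _ => hinner i)]
  rw [Fin.sum_univ_eq_sum_range (fun i => if i < N then F' i else 0) M]
  rw [← Finset.sum_subset (Finset.range_subset_range.mpr (min_le_left M N))]
  · apply Finset.sum_congr rfl
    intro i hi
    have := Finset.mem_range.mp hi
    rw [if_pos (lt_of_lt_of_le this (min_le_right M N))]
  · intro i hi hni
    have h1 := Finset.mem_range.mp hi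
    have h2 : ¬ i < min M N := fun hc => hni (Finset.mem_range.mpr hc)
    rw [if_neg]
    intro hc
    exact h2 (lt_min h1 hc)

lemma amgm (x y : ℝ) : x * y ≤ (x^2 + y^2)/2 := by nlinarith [sq_nonneg (x - y)]

section VN2
variable {n0 k : ℕ} {σ s' : ℕ → ℝ} {g h : ℕ → ℕ → ℝ}

/-- Partial-sum bound: for each `b < k`,
`∑_{j ≤ b} c j ≤ ∑_{i ≤ b} σ i` where `c j = ∑_{i < n0} σ i * g i j * h i j`. -/
lemma Cbound (hk : k ≤ n0)
    (hσmono : ∀ i j, i ≤ j → σ j ≤ σ i) (hσ0 : ∀ i, 0 ≤ σ i)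
    (hrow : ∀ i, ∑ j ∈ range k, (g i j^2 + h i j^2)/2 ≤ 1)
    (hcol : ∀ j, j < k → ∑ i ∈ range n0, (g i j^2 + h i j^2)/2 ≤ 1)
    (b : ℕ) (hb : b < k) :
    ∑ j ∈ range (b+1), (∑ i ∈ range n0, σ i * (g i j * h i j))
      ≤ ∑ i ∈ range (b+1), σ i := by
  set r : ℕ → ℝ := fun i => ∑ j ∈ range (b+1), (g i j^2 + h i j^2)/2 with hr
  have hb1k : b + 1 ≤ k := hb
  have hsub : range (b+1) ⊆ range k := Finset.range_subset_range.mpr hb1k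
  have hr0 : ∀ i, 0 ≤ r i := by
    intro i; apply Finset.sum_nonneg; intro j _; positivity
  have hr1 : ∀ i, r i ≤ 1 := by
    intro i
    refine le_trans (Finset.sum_le_sum_of_subset_of_nonneg hsub ?_) (hrow i)
    intro j _ _; positivity
  have hsum : ∑ i ∈ range n0, r i ≤ ((b+1 : ℕ) : ℝ) := by
    rw [hr, Finset.sum_comm]
    calc ∑ j ∈ range (b+1), ∑ i ∈ range n0, (g i j^2 + h i j^2)/2
        ≤ ∑ j ∈ range (b+1), (1:ℝ) := by
          apply Finset.sum_le_sum
          intro j hj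
          exact hcol j (lt_of_lt_of_le (Finset.mem_range.mp hj) hb1k)
      _ = ((b+1 : ℕ) : ℝ) := by simp
  have hswap : ∑ j ∈ range (b+1), (∑ i ∈ range n0, σ i * (g i j * h i j))
      = ∑ i ∈ range n0, σ i * (∑ j ∈ range (b+1), g i j * h i j) := by
    rw [Finset.sum_comm]
    exact Finset.sum_congr rfl fun i _ => (Finset.mul_sum _ _ _).symm
  rw [hswap]
  have hstep : ∑ i ∈ range n0, σ i * (∑ j ∈ range (b+1), g i j * h i j)
      ≤ ∑ i ∈ range n0, σ i * r i := by
    apply Finset.sum_le_sum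
    intro i _
    apply mul_le_mul_of_nonneg_left _ (hσ0 i)
    apply Finset.sum_le_sum
    intro j _
    exact amgm (g i j) (h i j)
  exact le_trans hstep (greedy_le σ r n0 (b+1) (le_trans hb1k hk) hσmono hσ0 hr0 hr1 hsum)

lemma vn_le (hk : k ≤ n0)
    (hσmono : ∀ i j, i ≤ j → σ j ≤ σ i) (hσ0 : ∀ i, 0 ≤ σ i)
    (hrow : ∀ i, ∑ j ∈ range k, (g i j^2 + h i j^2)/2 ≤ 1)
    (hcol : ∀ j, j < k → ∑ i ∈ range n0, (g i j^2 + h i j^2)/2 ≤ 1)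
    (hs'mono : ∀ b, s' (b+1) ≤ s' b) (hs'k : s' k = 0) :
    ∑ j ∈ range k, s' j * (∑ i ∈ range n0, σ i * (g i j * h i j))
      ≤ ∑ j ∈ range k, σ j * s' j := by
  set c : ℕ → ℝ := fun j => ∑ i ∈ range n0, σ i * (g i j * h i j) with hc
  have h1 := abel_id s' c k
  rw [hs'k, zero_mul, add_zero] at h1
  have h2 := abel_id s' σ k
  rw [hs'k, zero_mul, add_zero] at h2
  have h3 : ∑ j ∈ range k, σ j * s' j = ∑ j ∈ range k, s' j * σ j := by
    exact Finset.sum_congr rfl fun j _ => mul_comm _ _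
  rw [h3, h1, h2]
  apply Finset.sum_le_sum
  intro b hb
  have hΔ : 0 ≤ s' b - s' (b+1) := by have := hs'mono b; linarith
  apply mul_le_mul_of_nonneg_left _ hΔ
  exact Cbound hk hσmono hσ0 hrow hcol b (Finset.mem_range.mp hb)

lemma stepA (hk : k ≤ n0)
    (hσmono : ∀ i j, i ≤ j → σ j ≤ σ i) (hσ0 : ∀ i, 0 ≤ σ i)
    (hrow : ∀ i, ∑ j ∈ range k, (g i j^2 + h i j^2)/2 ≤ 1)
    (hcol : ∀ j, j < k → ∑ i ∈ range n0, (g i j^2 + h i j^2)/2 ≤ 1)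
    (hs'σ : ∀ j, j < k → s' j = σ j) (hs'k : ∀ j, k ≤ j → s' j = 0)
    (hstrict : ∀ i j, i < j → j ≤ k → σ j < σ i)
    (heq : ∑ j ∈ range k, s' j * (∑ i ∈ range n0, σ i * (g i j * h i j))
      = ∑ j ∈ range k, σ j * s' j) :
    ∀ b, b < k → ∑ j ∈ range (b+1), (∑ i ∈ range n0, σ i * (g i j * h i j))
      = ∑ i ∈ range (b+1), σ i := by
  set c : ℕ → ℝ := fun j => ∑ i ∈ range n0, σ i * (g i j * h i j) with hc
  have hs'mono : ∀ b, s' (b+1) ≤ s' b := by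
    intro b
    by_cases hbk : b + 1 < k
    · rw [hs'σ _ hbk, hs'σ _ (Nat.lt_of_succ_lt hbk)]
      exact le_of_lt (hstrict b (b+1) (Nat.lt_succ_self b) (le_of_lt hbk))
    · rw [hs'k _ (Nat.le_of_not_lt hbk)]
      by_cases hbk2 : b < k
      · rw [hs'σ _ hbk2]
        have : σ b > σ k := hstrict b k hbk2 le_rfl
        have := hσ0 k
        linarith
      · rw [hs'k _ (Nat.le_of_not_lt hbk2)]
  have hskz : s' k = 0 := hs'k k le_rfl
  have h1 := abel_id s' c k
  rw [hskz, zero_mul, add_zero] at h1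
  have h2 := abel_id s' σ k
  rw [hskz, zero_mul, add_zero] at h2
  have h3 : ∑ j ∈ range k, σ j * s' j = ∑ j ∈ range k, s' j * σ j :=
    Finset.sum_congr rfl fun j _ => mul_comm _ _
  rw [h3, h2, h1] at heq
  have hzero : ∑ b ∈ range k, ((s' b - s' (b+1)) *
      ((∑ j ∈ range (b+1), σ j) - (∑ j ∈ range (b+1), c j))) = 0 := by
    have : ∀ b ∈ range k, (s' b - s' (b+1)) *
        ((∑ j ∈ range (b+1), σ j) - (∑ j ∈ range (b+1), c j))
        = (s' b - s' (b+1)) * (∑ j ∈ range (b+1), σ j)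
          - (s' b - s' (b+1)) * (∑ j ∈ range (b+1), c j) := by
      intro b _; ring
    rw [Finset.sum_congr rfl this, Finset.sum_sub_distrib, ← heq, sub_self]
  have hterm := (Finset.sum_eq_zero_iff_of_nonneg ?_).mp hzero
  · intro b hbk
    have hb := hterm b (Finset.mem_range.mpr hbk)
    have hΔpos : 0 < s' b - s' (b+1) := by
      rw [hs'σ _ hbk]
      by_cases hbk2 : b + 1 < k
      · rw [hs'σ _ hbk2]
        have := hstrict b (b+1) (Nat.lt_succ_self b) (le_of_lt hbk2)
        linarith
      · rw [hs'k _ (Nat.le_of_not_lt hbk2)]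
        have := hstrict b k hbk le_rfl
        have := hσ0 k
        linarith
    have := mul_eq_zero.mp hb
    rcases this with h' | h'
    · exact absurd h' (ne_of_gt hΔpos)
    · linarith
  · intro b hbk
    have hΔ : 0 ≤ s' b - s' (b+1) := by have := hs'mono b; linarith
    have hCb := Cbound hk hσmono hσ0 hrow hcol b (Finset.mem_range.mp hbk)
    have : (0:ℝ) ≤ (∑ j ∈ range (b+1), σ j) - (∑ j ∈ range (b+1), c j) := by
      rw [hc] at *; linarith
    positivity

lemma stepB (hk : k ≤ n0)
    (hσmono : ∀ i j, i ≤ j → σ j ≤ σ i) (hσ0 : ∀ i, 0 ≤ σ i)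
    (hrow : ∀ i, ∑ j ∈ range k, (g i j^2 + h i j^2)/2 ≤ 1)
    (hcol : ∀ j, j < k → ∑ i ∈ range n0, (g i j^2 + h i j^2)/2 ≤ 1)
    (hstrict : ∀ i j, i < j → j ≤ k → σ j < σ i)
    (b : ℕ) (hb : b < k)
    (hCeq : ∑ j ∈ range (b+1), (∑ i ∈ range n0, σ i * (g i j * h i j))
      = ∑ i ∈ range (b+1), σ i) :
    (∀ i, i < b+1 → ∑ j ∈ range (b+1), (g i j^2 + h i j^2)/2 = 1) ∧
    (0 < σ (b+1) → ∑ i ∈ range n0, (∑ j ∈ range (b+1), (g i j^2 + h i j^2)/2)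
        = ((b+1 : ℕ) : ℝ)) ∧
    (∀ i, i < n0 → 0 < σ i →
      ∑ j ∈ range (b+1), (g i j * h i j) = ∑ j ∈ range (b+1), (g i j^2 + h i j^2)/2) := by
  set r : ℕ → ℝ := fun i => ∑ j ∈ range (b+1), (g i j^2 + h i j^2)/2 with hr
  set ρ : ℕ → ℝ := fun i => ∑ j ∈ range (b+1), (g i j * h i j) with hρ
  have hb1k : b + 1 ≤ k := hb
  have hsub : range (b+1) ⊆ range k := Finset.range_subset_range.mpr hb1k
  have hr0 : ∀ i, 0 ≤ r i := by
    intro i; apply Finset.sum_nonneg; intro j _; positivity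
  have hr1 : ∀ i, r i ≤ 1 := by
    intro i
    refine le_trans (Finset.sum_le_sum_of_subset_of_nonneg hsub ?_) (hrow i)
    intro j _ _; positivity
  have hsum : ∑ i ∈ range n0, r i ≤ ((b+1 : ℕ) : ℝ) := by
    rw [hr, Finset.sum_comm]
    calc ∑ j ∈ range (b+1), ∑ i ∈ range n0, (g i j^2 + h i j^2)/2
        ≤ ∑ j ∈ range (b+1), (1:ℝ) := by
          apply Finset.sum_le_sum
          intro j hj
          exact hcol j (lt_of_lt_of_le (Finset.mem_range.mp hj) hb1k)
      _ = ((b+1 : ℕ) : ℝ) := by simp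
  have hswap : ∑ j ∈ range (b+1), (∑ i ∈ range n0, σ i * (g i j * h i j))
      = ∑ i ∈ range n0, σ i * ρ i := by
    rw [Finset.sum_comm]
    exact Finset.sum_congr rfl fun i _ => (Finset.mul_sum _ _ _).symm
  have hρr : ∀ i, σ i * ρ i ≤ σ i * r i := by
    intro i
    apply mul_le_mul_of_nonneg_left _ (hσ0 i)
    apply Finset.sum_le_sum
    intro j _
    exact amgm (g i j) (h i j)
  have hstep : ∑ i ∈ range n0, σ i * ρ i ≤ ∑ i ∈ range n0, σ i * r i :=
    Finset.sum_le_sum fun i _ => hρr i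
  have hgr := greedy_le σ r n0 (b+1) (le_trans hb1k hk) hσmono hσ0 hr0 hr1 hsum
  have hρeq : ∑ i ∈ range n0, σ i * ρ i = ∑ i ∈ range (b+1), σ i := by
    rw [← hswap]; exact hCeq
  have hreqσ : ∑ i ∈ range n0, σ i * r i = ∑ i ∈ range (b+1), σ i := le_antisymm hgr (by linarith)
  have hstrictb : ∀ i, i < b+1 → σ (b+1) < σ i := fun i hi => hstrict i (b+1) hi hb1k
  have hge := greedy_eq σ r n0 (b+1) (le_trans hb1k hk) hσmono hσ0 hr0 hr1 hsum hstrictb hreqσ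
  refine ⟨hge.1, hge.2, ?_⟩
  intro i hin0 hσi
  have hzero : ∑ i ∈ range n0, (σ i * r i - σ i * ρ i) = 0 := by
    rw [Finset.sum_sub_distrib, hreqσ, hρeq, sub_self]
  have hterm := (Finset.sum_eq_zero_iff_of_nonneg ?_).mp hzero i (Finset.mem_range.mpr hin0)
  · have : σ i * r i = σ i * ρ i := by linarith
    have := mul_left_cancel₀ (ne_of_gt hσi) this
    rw [hr, hρ] at this
    exact this.symm
  · intro x _
    have := hρr x
    linarith

lemma vn_eq (hk : k ≤ n0)
    (hσmono : ∀ i j, i ≤ j → σ j ≤ σ i) (hσ0 : ∀ i, 0 ≤ σ i)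
    (hrow : ∀ i, ∑ j ∈ range k, (g i j^2 + h i j^2)/2 ≤ 1)
    (hcol : ∀ j, j < k → ∑ i ∈ range n0, (g i j^2 + h i j^2)/2 ≤ 1)
    (hs'σ : ∀ j, j < k → s' j = σ j) (hs'k : ∀ j, k ≤ j → s' j = 0)
    (hstrict : ∀ i j, i < j → j ≤ k → σ j < σ i)
    (heq : ∑ j ∈ range k, s' j * (∑ i ∈ range n0, σ i * (g i j * h i j))
      = ∑ j ∈ range k, σ j * s' j) :
    ∀ j, j < k → g j j * h j j = 1 ∧ (g j j^2 + h j j^2)/2 = 1 := by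
  have hA := stepA hk hσmono hσ0 hrow hcol hs'σ hs'k hstrict heq
  have hσpos : ∀ j, j < k → 0 < σ j := by
    intro j hj
    have := hstrict j k hj le_rfl
    have := hσ0 k
    linarith
  intro j hj
  have hjn0 : j < n0 := lt_of_lt_of_le hj hk
  -- e j j' = 0 for j' < j
  have hzero_left : ∀ j', j' < j → (g j j'^2 + h j j'^2)/2 = 0 := by
    intro j' hj'
    have hj'k : j' < k := lt_trans hj' hj
    have hj'1k : j' + 1 < k := Nat.lt_of_lt_of_le (Nat.succ_lt_succ hj') hj
    have hB := stepB hk hσmono hσ0 hrow hcol hstrict j' hj'k (hA j' hj'k)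
    have hmass := hB.2.1 (hσpos (j'+1) hj'1k)
    have hones := hB.1
    -- split range n0 at j'+1
    have hsplit : ∑ i ∈ range n0, (∑ t ∈ range (j'+1), (g i t^2 + h i t^2)/2)
        = ∑ i ∈ range (j'+1), (∑ t ∈ range (j'+1), (g i t^2 + h i t^2)/2)
          + ∑ i ∈ Ico (j'+1) n0, (∑ t ∈ range (j'+1), (g i t^2 + h i t^2)/2) := by
      rw [Finset.sum_range_add_sum_Ico _ (le_trans hj'1k.le hk)]
    have hhead : ∑ i ∈ range (j'+1), (∑ t ∈ range (j'+1), (g i t^2 + h i t^2)/2)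
        = ((j'+1 : ℕ) : ℝ) := by
      rw [Finset.sum_congr rfl (fun i hi => hones i (Finset.mem_range.mp hi))]
      simp
    have htail : ∑ i ∈ Ico (j'+1) n0, (∑ t ∈ range (j'+1), (g i t^2 + h i t^2)/2) = 0 := by
      rw [hsplit, hhead] at hmass
      linarith
    have hjmem : j ∈ Ico (j'+1) n0 := Finset.mem_Ico.mpr ⟨hj', hjn0⟩
    have hrj : ∑ t ∈ range (j'+1), (g j t^2 + h j t^2)/2 = 0 := by
      have := (Finset.sum_eq_zero_iff_of_nonneg ?_).mp htail j hjmem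
      · exact this
      · intro x _
        apply Finset.sum_nonneg
        intro t _; positivity
    have := (Finset.sum_eq_zero_iff_of_nonneg ?_).mp hrj j' (Finset.mem_range.mpr (Nat.lt_succ_self j'))
    · exact this
    · intro t _; positivity
  -- r_j(j+1) = 1
  have hB := stepB hk hσmono hσ0 hrow hcol hstrict j hj (hA j hj)
  have hrj1 : ∑ t ∈ range (j+1), (g j t^2 + h j t^2)/2 = 1 :=
    hB.1 j (Nat.lt_succ_self j)
  have hejj : (g j j^2 + h j j^2)/2 = 1 := by
    rw [Finset.sum_range_succ] at hrj1
    have : ∑ t ∈ range j, (g j t^2 + h j t^2)/2 = 0 :=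
      Finset.sum_eq_zero (fun t ht => hzero_left t (Finset.mem_range.mp ht))
    rw [this] at hrj1
    linarith
  -- ρ = r pointwise at (j,j)
  have hρr := hB.2.2 j hjn0 (hσpos j hj)
  have hpt : g j j * h j j = (g j j^2 + h j j^2)/2 := by
    have hzero : ∑ t ∈ range (j+1), ((g j t^2 + h j t^2)/2 - g j t * h j t) = 0 := by
      rw [Finset.sum_sub_distrib, ← hρr, sub_self]
    have := (Finset.sum_eq_zero_iff_of_nonneg ?_).mp hzero j (Finset.mem_range.mpr (Nat.lt_succ_self j))
    · linarith
    · intro t _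
      have := amgm (g j t) (h j t)
      linarith
  exact ⟨by rw [hpt, hejj], hejj⟩

noncomputable def ext2 {M k : ℕ} (G : Matrix (Fin M) (Fin k) ℝ) : ℕ → ℕ → ℝ :=
  fun i j => if hij : i < M ∧ j < k then G ⟨i, hij.1⟩ ⟨j, hij.2⟩ else 0

noncomputable def ext1 {k : ℕ} (s : Fin k → ℝ) : ℕ → ℝ :=
  fun j => if hj : j < k then s ⟨j, hj⟩ else 0

lemma ext2_apply {M k : ℕ} (G : Matrix (Fin M) (Fin k) ℝ) (i : Fin M) (j : Fin k) :
    ext2 G (i : ℕ) (j : ℕ) = G i j := by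
  unfold ext2
  rw [dif_pos ⟨i.isLt, j.isLt⟩]

lemma ext1_apply {k : ℕ} (s : Fin k → ℝ) (j : Fin k) : ext1 s (j : ℕ) = s j := by
  unfold ext1
  rw [dif_pos j.isLt]

lemma ext2_colnorm {M k : ℕ} (G : Matrix (Fin M) (Fin k) ℝ) (hG : Gᵀ * G = 1)
    (j : ℕ) (hj : j < k) : ∑ i ∈ range M, (ext2 G i j)^2 = 1 := by
  have h1 : ((1 : Matrix (Fin k) (Fin k) ℝ)) ⟨j, hj⟩ ⟨j, hj⟩ = 1 := Matrix.one_apply_eq _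
  rw [← hG, Matrix.mul_apply] at h1
  rw [← Fin.sum_univ_eq_sum_range (fun i => (ext2 G i j)^2) M]
  rw [← h1]
  apply Finset.sum_congr rfl
  intro i _
  rw [Matrix.transpose_apply]
  have : ext2 G (i : ℕ) j = G i ⟨j, hj⟩ := by
    have := ext2_apply G i ⟨j, hj⟩
    simpa using this
  rw [this]; ring

lemma ext2_rowbound {M k : ℕ} (G : Matrix (Fin M) (Fin k) ℝ) (hG : Gᵀ * G = 1)
    (i : ℕ) : ∑ j ∈ range k, (ext2 G i j)^2 ≤ 1 := by
  by_cases hi : i < M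
  · have h1 := row_sq_le_one G hG ⟨i, hi⟩
    rw [← Fin.sum_univ_eq_sum_range (fun j => (ext2 G i j)^2) k]
    refine le_trans (le_of_eq ?_) h1
    apply Finset.sum_congr rfl
    intro j _
    have : ext2 G i (j : ℕ) = G ⟨i, hi⟩ j := by
      have := ext2_apply G ⟨i, hi⟩ j
      simpa using this
    rw [this]
  · have : ∀ j ∈ range k, (ext2 G i j)^2 = 0 := by
      intro j _
      unfold ext2
      rw [dif_neg (fun hc => hi hc.1)]
      norm_num
    rw [Finset.sum_congr rfl this]
    simp

lemma bridge {M N k : ℕ}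
    (U : Matrix (Fin M) (Fin M) ℝ) (V : Matrix (Fin N) (Fin N) ℝ)
    (hU : Uᵀ * U = 1) (hV : Vᵀ * V = 1)
    (σ : ℕ → ℝ) (Sig : Matrix (Fin M) (Fin N) ℝ)
    (hSig : ∀ (i : Fin M) (j : Fin N), Sig i j = if (i:ℕ) = (j:ℕ) then σ i else 0)
    (FA : Matrix (Fin M) (Fin k) ℝ) (FB : Matrix (Fin N) (Fin k) ℝ) (s : Fin k → ℝ)
    (hFA : FAᵀ * FA = 1) (hFB : FBᵀ * FB = 1) :
    frobSq (U * Sig * Vᵀ - FA * Matrix.diagonal s * FBᵀ)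
      = frobSq Sig
        - 2 * (∑ j ∈ range k, ext1 s j *
            (∑ i ∈ range (min M N), σ i * (ext2 (Uᵀ * FA) i j * ext2 (Vᵀ * FB) i j)))
        + ∑ j ∈ range k, (ext1 s j)^2 := by
  have hUU : U * Uᵀ = 1 := mul_eq_one_comm.mp hU
  have hVV : V * Vᵀ = 1 := mul_eq_one_comm.mp hV
  set G := Uᵀ * FA with hG
  set H := Vᵀ * FB with hH
  have hGo : Gᵀ * G = 1 := by
    rw [hG, Matrix.transpose_mul, Matrix.transpose_transpose]
    calc FAᵀ * U * (Uᵀ * FA) = FAᵀ * (U * Uᵀ) * FA := by simp only [Matrix.mul_assoc]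
      _ = 1 := by rw [hUU, Matrix.mul_one, hFA]
  have hHo : Hᵀ * H = 1 := by
    rw [hH, Matrix.transpose_mul, Matrix.transpose_transpose]
    calc FBᵀ * V * (Vᵀ * FB) = FBᵀ * (V * Vᵀ) * FB := by simp only [Matrix.mul_assoc]
      _ = 1 := by rw [hVV, Matrix.mul_one, hFB]
  -- step 1: orthogonal invariance
  have hX : Uᵀ * (U * Sig * Vᵀ - FA * Matrix.diagonal s * FBᵀ) * V
      = Sig - G * Matrix.diagonal s * Hᵀ := by
    rw [Matrix.mul_sub, Matrix.sub_mul]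
    congr 1
    · calc Uᵀ * (U * Sig * Vᵀ) * V = (Uᵀ * U) * Sig * (Vᵀ * V) := by
            simp only [Matrix.mul_assoc]
        _ = Sig := by rw [hU, hV, Matrix.one_mul, Matrix.mul_one]
    · have hHT : Hᵀ = FBᵀ * V := by
        rw [hH, Matrix.transpose_mul, Matrix.transpose_transpose]
      rw [hHT, hG]
      simp only [Matrix.mul_assoc]
  have step1 : frobSq (U * Sig * Vᵀ - FA * Matrix.diagonal s * FBᵀ)
      = frobSq (Sig - G * Matrix.diagonal s * Hᵀ) := by
    rw [← frobSq_conj U V hU hV, hX]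
  -- step 2: expansion
  have step2 : frobSq (Sig - G * Matrix.diagonal s * Hᵀ)
      = frobSq Sig
        - 2 * (∑ i, ∑ j, Sig i j * (G * Matrix.diagonal s * Hᵀ) i j)
        + ∑ j, (s j)^2 := by
    rw [frobSq_sub_expand, frobSq_GSH G H s hGo hHo]
  -- step 3: inner product identification
  have step3 : (∑ i, ∑ j, Sig i j * (G * Matrix.diagonal s * Hᵀ) i j)
      = ∑ j ∈ range k, ext1 s j *
          (∑ i ∈ range (min M N), σ i * (ext2 G i j * ext2 H i j)) := by
    have hentry : ∀ (a : Fin M) (b : Fin N), (G * Matrix.diagonal s * Hᵀ) a b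
        = ∑ j : Fin k, s j * G a j * H b j := by
      intro a b
      rw [Matrix.mul_apply]
      apply Finset.sum_congr rfl
      intro j _
      rw [Matrix.mul_diagonal, Matrix.transpose_apply]
      ring
    have h0 : (∑ i, ∑ j, Sig i j * (G * Matrix.diagonal s * Hᵀ) i j)
        = ∑ i : Fin M, ∑ i' : Fin N,
            (if (i:ℕ) = (i':ℕ) then σ i * ∑ j : Fin k, s j * G i j * H i' j else 0) := by
      apply Finset.sum_congr rfl; intro i _
      apply Finset.sum_congr rfl; intro i' _
      rw [hSig, hentry, ite_mul, zero_mul]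
    rw [h0]
    rw [pair_sum (fun i i' => σ i * ∑ j : Fin k, s (j : Fin k) * G i j * H i' j)
      (fun i => σ i * ∑ j ∈ range k, ext1 s j * (ext2 G i j * ext2 H i j)) ?_]
    · calc ∑ i ∈ range (min M N), σ i * ∑ j ∈ range k, ext1 s j * (ext2 G i j * ext2 H i j)
          = ∑ i ∈ range (min M N), ∑ j ∈ range k,
              σ i * (ext1 s j * (ext2 G i j * ext2 H i j)) :=
            Finset.sum_congr rfl fun i _ => Finset.mul_sum _ _ _
        _ = ∑ j ∈ range k, ∑ i ∈ range (min M N),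
              σ i * (ext1 s j * (ext2 G i j * ext2 H i j)) := Finset.sum_comm
        _ = ∑ j ∈ range k, ext1 s j *
              ∑ i ∈ range (min M N), σ i * (ext2 G i j * ext2 H i j) := by
            apply Finset.sum_congr rfl
            intro j _
            rw [Finset.mul_sum]
            apply Finset.sum_congr rfl
            intro i _
            ring
    · intro i i' hii'
      congr 1
      rw [← Fin.sum_univ_eq_sum_range (fun j => ext1 s j * (ext2 G (i:ℕ) j * ext2 H (i:ℕ) j)) k]
      apply Finset.sum_congr rfl
      intro j _
      rw [ext1_apply, ext2_apply]
      have : ext2 H (i : ℕ) (j : ℕ) = H i' j := by rw [hii', ext2_apply]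
      rw [this]
      ring
  -- step 4
  have step4 : (∑ j, (s j)^2) = ∑ j ∈ range k, (ext1 s j)^2 := by
    rw [← Fin.sum_univ_eq_sum_range (fun j => (ext1 s j)^2) k]
    apply Finset.sum_congr rfl
    intro j _
    rw [ext1_apply]
  rw [step1, step2, step3, step4]

lemma subcol_ortho {M k : ℕ} (hkM : k ≤ M) (U : Matrix (Fin M) (Fin M) ℝ)
    (hU : Uᵀ * U = 1) :
    (U.submatrix id (Fin.castLE hkM))ᵀ * (U.submatrix id (Fin.castLE hkM)) = 1 := by
  ext i j
  rw [Matrix.mul_apply]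
  have : ∀ l : Fin M, (U.submatrix id (Fin.castLE hkM))ᵀ i l
      * (U.submatrix id (Fin.castLE hkM)) l j
      = Uᵀ (Fin.castLE hkM i) l * U l (Fin.castLE hkM j) := by
    intro l
    rw [Matrix.transpose_apply, Matrix.submatrix_apply, Matrix.submatrix_apply,
      Matrix.transpose_apply]
    rfl
  rw [Finset.sum_congr rfl (fun l _ => this l), ← Matrix.mul_apply, hU]
  by_cases hij : i = j
  · subst hij; rw [Matrix.one_apply_eq, Matrix.one_apply_eq]
  · rw [Matrix.one_apply_ne hij, Matrix.one_apply_ne]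
    intro hc
    exact hij (Fin.castLE_injective hkM hc)

lemma canon_ortho {M k : ℕ} (hkM : k ≤ M) (U : Matrix (Fin M) (Fin M) ℝ)
    (hU : Uᵀ * U = 1) (ε : Fin k → ℝ) (hε : ∀ j, ε j = 1 ∨ ε j = -1) :
    (U.submatrix id (Fin.castLE hkM) * Matrix.diagonal ε)ᵀ
      * (U.submatrix id (Fin.castLE hkM) * Matrix.diagonal ε) = 1 := by
  set X := U.submatrix id (Fin.castLE hkM) with hX
  rw [Matrix.transpose_mul, Matrix.diagonal_transpose]
  calc Matrix.diagonal ε * Xᵀ * (X * Matrix.diagonal ε)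
      = Matrix.diagonal ε * (Xᵀ * X) * Matrix.diagonal ε := by simp only [Matrix.mul_assoc]
    _ = Matrix.diagonal ε * Matrix.diagonal ε := by
        rw [subcol_ortho hkM U hU, Matrix.mul_one]
    _ = 1 := by
        rw [Matrix.diagonal_mul_diagonal]
        have : (fun j => ε j * ε j) = fun _ => (1:ℝ) := by
          funext j
          rcases hε j with h | h <;> rw [h] <;> norm_num
        rw [this, Matrix.diagonal_one]

lemma canon_G {M k : ℕ} (hkM : k ≤ M) (U : Matrix (Fin M) (Fin M) ℝ)
    (hU : Uᵀ * U = 1) (ε : Fin k → ℝ) (a : Fin M) (b : Fin k) :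
    (Uᵀ * (U.submatrix id (Fin.castLE hkM) * Matrix.diagonal ε)) a b
      = if (a : ℕ) = (b : ℕ) then ε b else 0 := by
  rw [← Matrix.mul_assoc, Matrix.mul_diagonal]
  have h1 : (Uᵀ * U.submatrix id (Fin.castLE hkM)) a b = (Uᵀ * U) a (Fin.castLE hkM b) := by
    rw [Matrix.mul_apply, Matrix.mul_apply]
    apply Finset.sum_congr rfl
    intro l _
    rw [Matrix.submatrix_apply]
    rfl
  rw [h1, hU]
  by_cases hab : a = Fin.castLE hkM b
  · rw [hab, Matrix.one_apply_eq, one_mul, if_pos (by simp)]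
  · rw [Matrix.one_apply_ne hab, zero_mul, if_neg]
    intro hc
    exact hab (Fin.ext hc)

lemma canon_val {M N k : ℕ} (hkM : k ≤ M) (hkN : k ≤ N)
    (U : Matrix (Fin M) (Fin M) ℝ) (V : Matrix (Fin N) (Fin N) ℝ)
    (hU : Uᵀ * U = 1) (hV : Vᵀ * V = 1)
    (σ : ℕ → ℝ) (Sig : Matrix (Fin M) (Fin N) ℝ)
    (hSig : ∀ (i : Fin M) (j : Fin N), Sig i j = if (i:ℕ) = (j:ℕ) then σ i else 0)
    (ε : Fin k → ℝ) (hε : ∀ j, ε j = 1 ∨ ε j = -1) :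
    frobSq (U * Sig * Vᵀ
        - (U.submatrix id (Fin.castLE hkM) * Matrix.diagonal ε)
          * Matrix.diagonal (fun j : Fin k => σ (j : ℕ))
          * (V.submatrix id (Fin.castLE hkN) * Matrix.diagonal ε)ᵀ)
      = frobSq Sig - ∑ j ∈ range k, (σ j)^2 := by
  set s0 : Fin k → ℝ := fun j => σ (j : ℕ) with hs0
  set FA0 := U.submatrix id (Fin.castLE hkM) * Matrix.diagonal ε with hFA0d
  set FB0 := V.submatrix id (Fin.castLE hkN) * Matrix.diagonal ε with hFB0d
  have hFA0 : FA0ᵀ * FA0 = 1 := canon_ortho hkM U hU ε hε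
  have hFB0 : FB0ᵀ * FB0 = 1 := canon_ortho hkN V hV ε hε
  rw [bridge U V hU hV σ Sig hSig FA0 FB0 s0 hFA0 hFB0]
  have hks : ∀ j, j < k → ext1 s0 j = σ j := by
    intro j hj
    unfold ext1
    rw [dif_pos hj]
  have hgc : ∀ (i j : ℕ) (hi : i < min M N) (hj : j < k),
      ext2 (Uᵀ * FA0) i j = if i = j then ε ⟨j, hj⟩ else 0 := by
    intro i j hi hj
    have hiM : i < M := lt_of_lt_of_le hi (min_le_left M N)
    have : ext2 (Uᵀ * FA0) i j = (Uᵀ * FA0) ⟨i, hiM⟩ ⟨j, hj⟩ := by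
      have := ext2_apply (Uᵀ * FA0) ⟨i, hiM⟩ ⟨j, hj⟩
      simpa using this
    rw [this, hFA0d, canon_G hkM U hU ε]
  have hhc : ∀ (i j : ℕ) (hi : i < min M N) (hj : j < k),
      ext2 (Vᵀ * FB0) i j = if i = j then ε ⟨j, hj⟩ else 0 := by
    intro i j hi hj
    have hiN : i < N := lt_of_lt_of_le hi (min_le_right M N)
    have : ext2 (Vᵀ * FB0) i j = (Vᵀ * FB0) ⟨i, hiN⟩ ⟨j, hj⟩ := by
      have := ext2_apply (Vᵀ * FB0) ⟨i, hiN⟩ ⟨j, hj⟩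
      simpa using this
    rw [this, hFB0d, canon_G hkN V hV ε]
  have hT : (∑ j ∈ range k, ext1 s0 j *
      (∑ i ∈ range (min M N), σ i * (ext2 (Uᵀ * FA0) i j * ext2 (Vᵀ * FB0) i j)))
      = ∑ j ∈ range k, (σ j)^2 := by
    apply Finset.sum_congr rfl
    intro j hj
    have hjk := Finset.mem_range.mp hj
    have hinner : (∑ i ∈ range (min M N), σ i * (ext2 (Uᵀ * FA0) i j * ext2 (Vᵀ * FB0) i j))
        = σ j := by
      have hpt : ∀ i ∈ range (min M N),
          σ i * (ext2 (Uᵀ * FA0) i j * ext2 (Vᵀ * FB0) i j)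
          = if i = j then σ j else 0 := by
        intro i hi
        have himin := Finset.mem_range.mp hi
        rw [hgc i j himin hjk, hhc i j himin hjk]
        by_cases hij : i = j
        · subst hij
          simp only [if_pos rfl]
          rcases hε ⟨i, hjk⟩ with h | h <;> rw [h] <;> norm_num
        · simp only [if_neg hij]
          ring
      rw [Finset.sum_congr rfl hpt, Finset.sum_ite_eq' (range (min M N)) j (fun _ => σ j),
        if_pos (Finset.mem_range.mpr (lt_of_lt_of_le hjk (le_min hkM hkN)))]
    rw [hinner, hks j hjk]
    ring
  have hS2 : (∑ j ∈ range k, (ext1 s0 j)^2) = ∑ j ∈ range k, (σ j)^2 := by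
    apply Finset.sum_congr rfl
    intro j hj
    rw [hks j (Finset.mem_range.mp hj)]
  rw [hT, hS2]
  ring

lemma sigma_mono {k : ℕ} {σ : ℕ → ℝ}
    (hstrict : ∀ i j : ℕ, i < j → j ≤ k → σ j < σ i)
    (hmono : ∀ i j : ℕ, k ≤ i → i ≤ j → σ j ≤ σ i) :
    ∀ i j : ℕ, i ≤ j → σ j ≤ σ i := by
  intro i j hij
  rcases eq_or_lt_of_le hij with rfl | hlt
  · exact le_refl _
  by_cases hjk : j ≤ k
  · exact le_of_lt (hstrict i j hlt hjk)
  by_cases hik : k ≤ i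
  · exact hmono i j hik hij
  · push_neg at hjk hik
    calc σ j ≤ σ k := hmono k j le_rfl (le_of_lt hjk)
      _ ≤ σ i := le_of_lt (hstrict i k hik le_rfl)

section Key

variable {M N k : ℕ} {U : Matrix (Fin M) (Fin M) ℝ} {V : Matrix (Fin N) (Fin N) ℝ}
  {σ : ℕ → ℝ} {Sig : Matrix (Fin M) (Fin N) ℝ}

lemma ortho_conj {M k : ℕ} (U : Matrix (Fin M) (Fin M) ℝ) (FA : Matrix (Fin M) (Fin k) ℝ)
    (hU : Uᵀ * U = 1) (hFA : FAᵀ * FA = 1) : (Uᵀ * FA)ᵀ * (Uᵀ * FA) = 1 := by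
  have hUU : U * Uᵀ = 1 := mul_eq_one_comm.mp hU
  rw [Matrix.transpose_mul, Matrix.transpose_transpose]
  calc FAᵀ * U * (Uᵀ * FA) = FAᵀ * (U * Uᵀ) * FA := by simp only [Matrix.mul_assoc]
    _ = 1 := by rw [hUU, Matrix.mul_one, hFA]

lemma ext1_zero {k : ℕ} (s : Fin k → ℝ) (j : ℕ) (hj : k ≤ j) : ext1 s j = 0 := by
  unfold ext1
  rw [dif_neg (by omega)]

lemma ext1_mono {k : ℕ} (s : Fin k → ℝ)
    (hsm : ∀ i j : Fin k, i ≤ j → s j ≤ s i) (hsnn : ∀ i : Fin k, 0 ≤ s i) :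
    ∀ b : ℕ, ext1 s (b+1) ≤ ext1 s b := by
  intro b
  by_cases hb1 : b + 1 < k
  · have hb : b < k := Nat.lt_of_succ_lt hb1
    unfold ext1
    rw [dif_pos hb1, dif_pos hb]
    exact hsm ⟨b, hb⟩ ⟨b+1, hb1⟩ (by simp [Fin.le_def])
  · rw [ext1_zero s (b+1) (Nat.le_of_not_lt hb1)]
    by_cases hb : b < k
    · unfold ext1; rw [dif_pos hb]; exact hsnn _
    · rw [ext1_zero s b (Nat.le_of_not_lt hb)]

lemma rowcol_bounds {M k : ℕ} (FA : Matrix (Fin M) (Fin k) ℝ) (hGo : FAᵀ * FA = 1) :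
    (∀ i, ∑ j ∈ range k, (ext2 FA i j)^2 ≤ 1) ∧
    (∀ j, j < k → ∑ i ∈ range M, (ext2 FA i j)^2 = 1) :=
  ⟨ext2_rowbound FA hGo, ext2_colnorm FA hGo⟩

lemma sq_expand_sum (k : ℕ) (a b : ℕ → ℝ) :
    ∑ j ∈ range k, (a j - b j)^2
      = ∑ j ∈ range k, (a j)^2 - 2 * ∑ j ∈ range k, b j * a j + ∑ j ∈ range k, (b j)^2 := by
  rw [Finset.mul_sum, ← Finset.sum_sub_distrib, ← Finset.sum_add_distrib]
  apply Finset.sum_congr rfl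
  intro j _
  ring

lemma hrow_of {M N k : ℕ} (FA : Matrix (Fin M) (Fin k) ℝ) (FB : Matrix (Fin N) (Fin k) ℝ)
    (hGo : FAᵀ * FA = 1) (hHo : FBᵀ * FB = 1) :
    ∀ i, ∑ j ∈ range k, (ext2 FA i j^2 + ext2 FB i j^2)/2 ≤ 1 := by
  intro i
  have h1 := ext2_rowbound FA hGo i
  have h2 := ext2_rowbound FB hHo i
  have : ∑ j ∈ range k, (ext2 FA i j^2 + ext2 FB i j^2)/2
      = ((∑ j ∈ range k, ext2 FA i j^2) + ∑ j ∈ range k, ext2 FB i j^2)/2 := by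
    rw [← Finset.sum_add_distrib, Finset.sum_div]
  rw [this]
  linarith

lemma hcol_of {M N k : ℕ} (FA : Matrix (Fin M) (Fin k) ℝ) (FB : Matrix (Fin N) (Fin k) ℝ)
    (hGo : FAᵀ * FA = 1) (hHo : FBᵀ * FB = 1) :
    ∀ j, j < k → ∑ i ∈ range (min M N), (ext2 FA i j^2 + ext2 FB i j^2)/2 ≤ 1 := by
  intro j hj
  have h1 := ext2_colnorm FA hGo j hj
  have h2 := ext2_colnorm FB hHo j hj
  have ha : ∑ i ∈ range (min M N), ext2 FA i j^2 ≤ 1 := by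
    rw [← h1]
    apply Finset.sum_le_sum_of_subset_of_nonneg
      (Finset.range_subset_range.mpr (min_le_left M N))
    intro i _ _; positivity
  have hb : ∑ i ∈ range (min M N), ext2 FB i j^2 ≤ 1 := by
    rw [← h2]
    apply Finset.sum_le_sum_of_subset_of_nonneg
      (Finset.range_subset_range.mpr (min_le_right M N))
    intro i _ _; positivity
  have : ∑ i ∈ range (min M N), (ext2 FA i j^2 + ext2 FB i j^2)/2
      = ((∑ i ∈ range (min M N), ext2 FA i j^2)
          + ∑ i ∈ range (min M N), ext2 FB i j^2)/2 := by
    rw [← Finset.sum_add_distrib, Finset.sum_div]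
  rw [this]
  linarith

lemma vn_main {M N k : ℕ} (hkM : k ≤ M) (hkN : k ≤ N)
    (σ : ℕ → ℝ)
    (hσmono : ∀ i j, i ≤ j → σ j ≤ σ i) (hσ0 : ∀ i, 0 ≤ σ i)
    (FA : Matrix (Fin M) (Fin k) ℝ) (FB : Matrix (Fin N) (Fin k) ℝ) (s : Fin k → ℝ)
    (hGo : FAᵀ * FA = 1) (hHo : FBᵀ * FB = 1)
    (hsm : ∀ i j : Fin k, i ≤ j → s j ≤ s i) (hsnn : ∀ i : Fin k, 0 ≤ s i) :
    ∑ j ∈ range k, ext1 s j *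
        (∑ i ∈ range (min M N), σ i * (ext2 FA i j * ext2 FB i j))
      ≤ ∑ j ∈ range k, σ j * ext1 s j :=
  vn_le (le_min hkM hkN) hσmono hσ0 (hrow_of FA FB hGo hHo) (hcol_of FA FB hGo hHo)
    (ext1_mono s hsm hsnn) (ext1_zero s k le_rfl)

end Key

lemma key_lb {M N k : ℕ} (hkM : k ≤ M) (hkN : k ≤ N)
    (U : Matrix (Fin M) (Fin M) ℝ) (V : Matrix (Fin N) (Fin N) ℝ)
    (hU : Uᵀ * U = 1) (hV : Vᵀ * V = 1)
    (σ : ℕ → ℝ) (Sig : Matrix (Fin M) (Fin N) ℝ)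
    (hSig : ∀ (i : Fin M) (j : Fin N), Sig i j = if (i:ℕ) = (j:ℕ) then σ i else 0)
    (hσmono : ∀ i j, i ≤ j → σ j ≤ σ i) (hσ0 : ∀ i, 0 ≤ σ i)
    (FA : Matrix (Fin M) (Fin k) ℝ) (FB : Matrix (Fin N) (Fin k) ℝ) (s : Fin k → ℝ)
    (hFA : FAᵀ * FA = 1) (hFB : FBᵀ * FB = 1)
    (hsm : ∀ i j : Fin k, i ≤ j → s j ≤ s i) (hsnn : ∀ i : Fin k, 0 ≤ s i) :
    frobSq Sig - ∑ j ∈ range k, (σ j)^2 + ∑ j ∈ range k, (ext1 s j - σ j)^2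
      ≤ frobSq (U * Sig * Vᵀ - FA * Matrix.diagonal s * FBᵀ) := by
  rw [bridge U V hU hV σ Sig hSig FA FB s hFA hFB]
  have hT := vn_main hkM hkN σ hσmono hσ0 (Uᵀ * FA) (Vᵀ * FB) s
    (ortho_conj U FA hU hFA) (ortho_conj V FB hV hFB) hsm hsnn
  have hid := sq_expand_sum k (ext1 s) σ
  linarith

lemma key_eq {M N k : ℕ} (hkM : k ≤ M) (hkN : k ≤ N)
    (U : Matrix (Fin M) (Fin M) ℝ) (V : Matrix (Fin N) (Fin N) ℝ)
    (hU : Uᵀ * U = 1) (hV : Vᵀ * V = 1)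
    (σ : ℕ → ℝ) (Sig : Matrix (Fin M) (Fin N) ℝ)
    (hSig : ∀ (i : Fin M) (j : Fin N), Sig i j = if (i:ℕ) = (j:ℕ) then σ i else 0)
    (hstrict : ∀ i j : ℕ, i < j → j ≤ k → σ j < σ i)
    (hmono : ∀ i j : ℕ, k ≤ i → i ≤ j → σ j ≤ σ i)
    (hσ0 : ∀ i, 0 ≤ σ i)
    (FA : Matrix (Fin M) (Fin k) ℝ) (FB : Matrix (Fin N) (Fin k) ℝ) (s : Fin k → ℝ)
    (hFA : FAᵀ * FA = 1) (hFB : FBᵀ * FB = 1)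
    (hsm : ∀ i j : Fin k, i ≤ j → s j ≤ s i) (hsnn : ∀ i : Fin k, 0 ≤ s i)
    (heqf : frobSq (U * Sig * Vᵀ - FA * Matrix.diagonal s * FBᵀ)
      = frobSq Sig - ∑ j ∈ range k, (σ j)^2) :
    (∀ j : Fin k, s j = σ (j : ℕ)) ∧
    (∀ j, j < k → ext2 (Uᵀ * FA) j j * ext2 (Vᵀ * FB) j j = 1 ∧
      (ext2 (Uᵀ * FA) j j^2 + ext2 (Vᵀ * FB) j j^2)/2 = 1) := by
  have hσmono := sigma_mono hstrict hmono
  have hGo := ortho_conj U FA hU hFA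
  have hHo := ortho_conj V FB hV hFB
  have hbr := bridge U V hU hV σ Sig hSig FA FB s hFA hFB
  rw [heqf] at hbr
  have hT := vn_main hkM hkN σ hσmono hσ0 (Uᵀ * FA) (Vᵀ * FB) s hGo hHo hsm hsnn
  have hid := sq_expand_sum k (ext1 s) σ
  -- sum of squares ≤ 0
  have hsq0 : ∑ j ∈ range k, (ext1 s j - σ j)^2 ≤ 0 := by linarith
  have hsz : ∀ j ∈ range k, (ext1 s j - σ j)^2 = 0 := by
    intro j hj
    have hnn : ∀ j ∈ range k, (0:ℝ) ≤ (ext1 s j - σ j)^2 := by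
      intro j _; positivity
    have := Finset.sum_eq_zero_iff_of_nonneg hnn
    have hz : ∑ j ∈ range k, (ext1 s j - σ j)^2 = 0 :=
      le_antisymm hsq0 (Finset.sum_nonneg hnn)
    exact (this.mp hz) j hj
  have hsσ : ∀ j, j < k → ext1 s j = σ j := by
    intro j hj
    have := hsz j (Finset.mem_range.mpr hj)
    have := sq_eq_zero_iff.mp this
    linarith
  have hsfun : ∀ j : Fin k, s j = σ (j : ℕ) := by
    intro j
    have := hsσ (j : ℕ) j.isLt
    rw [ext1_apply] at this
    exact this
  refine ⟨hsfun, ?_⟩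
  -- derive exact vn equality
  have hS2 : ∑ j ∈ range k, (ext1 s j)^2 = ∑ j ∈ range k, (σ j)^2 :=
    Finset.sum_congr rfl fun j hj => by rw [hsσ j (Finset.mem_range.mp hj)]
  have hRS : ∑ j ∈ range k, σ j * ext1 s j = ∑ j ∈ range k, (σ j)^2 :=
    Finset.sum_congr rfl fun j hj => by rw [hsσ j (Finset.mem_range.mp hj)]; ring
  have hTeq : ∑ j ∈ range k, ext1 s j *
      (∑ i ∈ range (min M N), σ i * (ext2 (Uᵀ * FA) i j * ext2 (Vᵀ * FB) i j))
      = ∑ j ∈ range k, σ j * ext1 s j := by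
    rw [hRS]; linarith
  exact vn_eq (le_min hkM hkN) hσmono hσ0
    (hrow_of (Uᵀ * FA) (Vᵀ * FB) hGo hHo) (hcol_of (Uᵀ * FA) (Vᵀ * FB) hGo hHo)
    hsσ (ext1_zero s) hstrict hTeq

lemma recover {M k : ℕ} (hkM : k ≤ M) (U : Matrix (Fin M) (Fin M) ℝ) (hU : Uᵀ * U = 1)
    (FA : Matrix (Fin M) (Fin k) ℝ) (hFA : FAᵀ * FA = 1)
    (ε : Fin k → ℝ)
    (hdiag : ∀ j : Fin k, (Uᵀ * FA) (Fin.castLE hkM j) j = ε j)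
    (hsq : ∀ j : Fin k, (ε j)^2 = 1) :
    FA = U.submatrix id (Fin.castLE hkM) * Matrix.diagonal ε := by
  have hGo := ortho_conj U FA hU hFA
  set G := Uᵀ * FA with hG
  have colnorm : ∀ j : Fin k, ∑ i : Fin M, (G i j)^2 = 1 := by
    intro j
    have h1 : ((1 : Matrix (Fin k) (Fin k) ℝ)) j j = 1 := Matrix.one_apply_eq _
    rw [← hGo, Matrix.mul_apply] at h1
    rw [← h1]
    apply Finset.sum_congr rfl
    intro i _
    rw [Matrix.transpose_apply]; ring
  have hzero : ∀ (j : Fin k) (i : Fin M), i ≠ Fin.castLE hkM j → G i j = 0 := by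
    intro j i hne
    have hsplit := Finset.add_sum_erase Finset.univ (fun i => (G i j)^2)
      (Finset.mem_univ (Fin.castLE hkM j))
    have hsplit' : (G (Fin.castLE hkM j) j)^2
        + ∑ x ∈ Finset.univ.erase (Fin.castLE hkM j), (G x j)^2 = 1 := by
      rw [colnorm j] at hsplit
      simpa using hsplit
    have hdj : (G (Fin.castLE hkM j) j)^2 = 1 := by rw [hdiag j]; exact hsq j
    have herase : ∑ i ∈ Finset.univ.erase (Fin.castLE hkM j), (G i j)^2 = 0 := by
      linarith [hsplit']
    have := (Finset.sum_eq_zero_iff_of_nonneg ?_).mp herase i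
      (Finset.mem_erase.mpr ⟨hne, Finset.mem_univ i⟩)
    · exact pow_eq_zero_iff (by norm_num) |>.mp this
    · intro x _; positivity
  have hUU : U * Uᵀ = 1 := mul_eq_one_comm.mp hU
  have hform : FA = U * G := by
    rw [hG, ← Matrix.mul_assoc, hUU, Matrix.one_mul]
  rw [hform]
  ext a b
  rw [Matrix.mul_apply, Matrix.mul_diagonal, Matrix.submatrix_apply]
  have hterm : ∀ l : Fin M, U a l * G l b
      = if l = Fin.castLE hkM b then U a (Fin.castLE hkM b) * ε b else 0 := by
    intro l
    by_cases hl : l = Fin.castLE hkM b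
    · rw [if_pos hl, hl, hdiag b]
    · rw [if_neg hl, hzero b l hl, mul_zero]
  rw [Finset.sum_congr rfl (fun l _ => hterm l),
    Finset.sum_ite_eq' Finset.univ (Fin.castLE hkM b)
      (fun _ => U a (Fin.castLE hkM b) * ε b),
    if_pos (Finset.mem_univ _)]
  rfl

/-- **identifiability of asymmetric triCL.**
Let `P̄ = U Σ Vᵀ` be an SVD with singular values (0-based `σ 0 > σ 1 > … > σ (k-1) > σ k ≥ … ≥ 0`,
i.e. the `k` largest are positive, pairwise distinct and strictly larger than the rest).
Over all triples `(F_A, S, F_B)` with orthonormal columns and `S = diag(s)` nonincreasing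
nonnegative, the minimizers of `‖P̄ − F_A S F_Bᵀ‖_F²` are exactly those with
`s = (σ 0, …, σ (k-1))`, `F_A = Uᵏ E`, `F_B = Vᵏ E` for the same diagonal `±1` matrix `E`. -/
theorem stmt_15 {M N k : ℕ} (hkM : k ≤ M) (hkN : k ≤ N)
    (P : Matrix (Fin M) (Fin N) ℝ)
    (U : Matrix (Fin M) (Fin M) ℝ) (V : Matrix (Fin N) (Fin N) ℝ)
    (hU : Uᵀ * U = 1) (hV : Vᵀ * V = 1)
    (σ : ℕ → ℝ)
    (Sig : Matrix (Fin M) (Fin N) ℝ)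
    (hSig : ∀ (i : Fin M) (j : Fin N), Sig i j = if (i : ℕ) = (j : ℕ) then σ i else 0)
    (hP : P = U * Sig * Vᵀ)
    (hstrict : ∀ i j : ℕ, i < j → j ≤ k → σ j < σ i)
    (hmono : ∀ i j : ℕ, k ≤ i → i ≤ j → σ j ≤ σ i)
    (hnonneg : ∀ i : ℕ, 0 ≤ σ i) :
    ∀ (FA : Matrix (Fin M) (Fin k) ℝ) (FB : Matrix (Fin N) (Fin k) ℝ) (s : Fin k → ℝ),
      ((FAᵀ * FA = 1 ∧ FBᵀ * FB = 1 ∧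
          (∀ i j : Fin k, i ≤ j → s j ≤ s i) ∧ (∀ i : Fin k, 0 ≤ s i)) ∧
        (∀ (FA' : Matrix (Fin M) (Fin k) ℝ) (FB' : Matrix (Fin N) (Fin k) ℝ)
            (s' : Fin k → ℝ),
          FA'ᵀ * FA' = 1 → FB'ᵀ * FB' = 1 →
          (∀ i j : Fin k, i ≤ j → s' j ≤ s' i) → (∀ i : Fin k, 0 ≤ s' i) →
          frobSq (P - FA * Matrix.diagonal s * FBᵀ) ≤
            frobSq (P - FA' * Matrix.diagonal s' * FB'ᵀ)))
      ↔ ((s = fun j : Fin k => σ (j : ℕ)) ∧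
          ∃ ε : Fin k → ℝ, (∀ j : Fin k, ε j = 1 ∨ ε j = -1) ∧
            FA = U.submatrix id (Fin.castLE hkM) * Matrix.diagonal ε ∧
            FB = V.submatrix id (Fin.castLE hkN) * Matrix.diagonal ε) := by
  subst hP
  have hσmono := sigma_mono hstrict hmono
  have hσ0 := hnonneg
  -- canonical singular values as Fin k function
  set s0 : Fin k → ℝ := fun j : Fin k => σ (j : ℕ) with hs0
  have hs0m : ∀ i j : Fin k, i ≤ j → s0 j ≤ s0 i := by
    intro i j hij
    exact hσmono _ _ (by exact_mod_cast hij)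
  have hs0nn : ∀ i : Fin k, 0 ≤ s0 i := fun i => hσ0 _
  intro FA FB s
  constructor
  · rintro ⟨⟨hFA, hFB, hsm, hsnn⟩, hminim⟩
    -- compare with the canonical competitor (ε = 1)
    set ε1 : Fin k → ℝ := fun _ => 1 with hε1
    have hε1pm : ∀ j : Fin k, ε1 j = 1 ∨ ε1 j = -1 := fun j => Or.inl rfl
    set FA1 := U.submatrix id (Fin.castLE hkM) * Matrix.diagonal ε1 with hFA1
    set FB1 := V.submatrix id (Fin.castLE hkN) * Matrix.diagonal ε1 with hFB1
    have hcmp := hminim FA1 FB1 s0 (canon_ortho hkM U hU ε1 hε1pm)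
      (canon_ortho hkN V hV ε1 hε1pm) hs0m hs0nn
    have hval : frobSq (U * Sig * Vᵀ - FA1 * Matrix.diagonal s0 * FB1ᵀ)
        = frobSq Sig - ∑ j ∈ range k, (σ j)^2 :=
      canon_val hkM hkN U V hU hV σ Sig hSig ε1 hε1pm
    have hlb := key_lb hkM hkN U V hU hV σ Sig hSig hσmono hσ0 FA FB s hFA hFB hsm hsnn
    have hsqnn : 0 ≤ ∑ j ∈ range k, (ext1 s j - σ j)^2 := by positivity
    have heqf : frobSq (U * Sig * Vᵀ - FA * Matrix.diagonal s * FBᵀ)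
        = frobSq Sig - ∑ j ∈ range k, (σ j)^2 := by
      rw [hval] at hcmp
      linarith
    obtain ⟨hseq, hstruct⟩ := key_eq hkM hkN U V hU hV σ Sig hSig hstrict hmono hσ0
      FA FB s hFA hFB hsm hsnn heqf
    refine ⟨funext hseq, ?_⟩
    set ε : Fin k → ℝ := fun j => (Uᵀ * FA) (Fin.castLE hkM j) j with hε
    have hfacts : ∀ j : Fin k,
        (Uᵀ * FA) (Fin.castLE hkM j) j * (Vᵀ * FB) (Fin.castLE hkN j) j = 1 ∧
        ((Uᵀ * FA) (Fin.castLE hkM j) j)^2 + ((Vᵀ * FB) (Fin.castLE hkN j) j)^2 = 2 := by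
      intro j
      obtain ⟨h1, h2⟩ := hstruct (j : ℕ) j.isLt
      have ea : ext2 (Uᵀ * FA) (j : ℕ) (j : ℕ) = (Uᵀ * FA) (Fin.castLE hkM j) j := by
        have := ext2_apply (Uᵀ * FA) (Fin.castLE hkM j) j
        simpa using this
      have eb : ext2 (Vᵀ * FB) (j : ℕ) (j : ℕ) = (Vᵀ * FB) (Fin.castLE hkN j) j := by
        have := ext2_apply (Vᵀ * FB) (Fin.castLE hkN j) j
        simpa using this
      rw [ea, eb] at h1 h2
      exact ⟨h1, by linarith⟩
    have hab : ∀ j : Fin k, (Vᵀ * FB) (Fin.castLE hkN j) j = ε j := by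
      intro j
      obtain ⟨h1, h2⟩ := hfacts j
      have : ((Uᵀ * FA) (Fin.castLE hkM j) j - (Vᵀ * FB) (Fin.castLE hkN j) j)^2 = 0 := by
        nlinarith
      have := sq_eq_zero_iff.mp this
      rw [hε]
      linarith
    have hsq : ∀ j : Fin k, (ε j)^2 = 1 := by
      intro j
      obtain ⟨h1, _⟩ := hfacts j
      rw [hab j] at h1
      rw [hε]
      nlinarith [h1]
    have hpm : ∀ j : Fin k, ε j = 1 ∨ ε j = -1 := by
      intro j
      have := hsq j
      rcases mul_self_eq_one_iff.mp (by nlinarith [this] : ε j * ε j = 1) with h | h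
      · exact Or.inl h
      · exact Or.inr h
    refine ⟨ε, hpm, ?_, ?_⟩
    · exact recover hkM U hU FA hFA ε (fun j => rfl) hsq
    · exact recover hkN V hV FB hFB ε hab hsq
  · rintro ⟨hseq, ε, hpm, hFAe, hFBe⟩
    have hFA : FAᵀ * FA = 1 := by rw [hFAe]; exact canon_ortho hkM U hU ε hpm
    have hFB : FBᵀ * FB = 1 := by rw [hFBe]; exact canon_ortho hkN V hV ε hpm
    have hsm : ∀ i j : Fin k, i ≤ j → s j ≤ s i := by rw [hseq]; exact hs0m
    have hsnn : ∀ i : Fin k, 0 ≤ s i := by rw [hseq]; exact hs0nn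
    refine ⟨⟨hFA, hFB, hsm, hsnn⟩, ?_⟩
    intro FA' FB' s' hFA' hFB' hsm' hsnn'
    have hval : frobSq (U * Sig * Vᵀ - FA * Matrix.diagonal s * FBᵀ)
        = frobSq Sig - ∑ j ∈ range k, (σ j)^2 := by
      rw [hFAe, hFBe, hseq]
      exact canon_val hkM hkN U V hU hV σ Sig hSig ε hpm
    have hlb := key_lb hkM hkN U V hU hV σ Sig hSig hσmono hσ0 FA' FB' s'
      hFA' hFB' hsm' hsnn'
    have hsqnn : 0 ≤ ∑ j ∈ range k, (ext1 s' j - σ j)^2 := by positivity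
    rw [hval]
    linarith
end VN2
end
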